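/- arXiv:2510.22193 — 10 statements merged into one kernel-verified Lean document; each statement's English description precedes it below -/
import Mathlib

section
/- Let G be a finite abelian group (written additively), n ≥ 1, and let S, T, U ⊆ G be subsets of size n such that |T − U| = n², where T − U = {t − u : t ∈ T, u ∈ U}. Then the number of 6-tuples (s₁,s₂,t₁,t₂,u₁,u₂) ∈ S² × T² × U² satisfying s₁ − s₂ + t₁ − t₂ = u₁ − u₂ is at least n⁶/|G|. In particular, the approximate triple product quantity of any finite abelian group G satisfies ρₙ(G) ≥ n⁶/|G|. -/
open scoped Pointwise

/-- Let `G` be a finite abelian group (additively), `n ≥ 1`, and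
`S, T, U ⊆ G` of size `n` with `|T - U| = n²`. Then the number of 6-tuples
`(s₁,s₂,t₁,t₂,u₁,u₂) ∈ S² × T² × U²` with `s₁ - s₂ + t₁ - t₂ = u₁ - u₂` is at least
`n⁶ / |G|` (the lower bound on the approximate triple product quantity `ρₙ(G)`). -/
theorem statement1 {G : Type*} [AddCommGroup G] [Fintype G] [DecidableEq G]
    (n : ℕ) (hn : 1 ≤ n) (S T U : Finset G)
    (hS : S.card = n) (hT : T.card = n) (hU : U.card = n)
    (hTU : (T - U).card = n ^ 2) :
    ((n : ℝ) ^ 6) / (Fintype.card G : ℝ) ≤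
      (((S ×ˢ S ×ˢ T ×ˢ T ×ˢ U ×ˢ U).filter
          (fun p : G × G × G × G × G × G =>
            p.1 - p.2.1 + p.2.2.1 - p.2.2.2.1 = p.2.2.2.2.1 - p.2.2.2.2.2)).card : ℝ) := by
  classical
  set A : Finset (G × G × G) := S ×ˢ T ×ˢ U with hA
  set key : G × G × G → G := fun p => p.1 + p.2.1 - p.2.2 with hkey
  set c : G → ℕ := fun z => (A.filter (fun p => key p = z)).card with hc
  have hsum : ∑ z : G, c z = n ^ 3 := by
    have h := Finset.card_eq_sum_card_fiberwise (f := key) (s := A) (t := Finset.univ)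
      (fun x _ => Finset.mem_univ _)
    rw [hc]
    rw [← h, hA, Finset.card_product, Finset.card_product, hS, hT, hU]
    ring
  -- Step 1: the big filtered set has the same card as pairs with equal key
  have hbij : (((S ×ˢ S ×ˢ T ×ˢ T ×ˢ U ×ˢ U).filter
          (fun p : G × G × G × G × G × G =>
            p.1 - p.2.1 + p.2.2.1 - p.2.2.2.1 = p.2.2.2.2.1 - p.2.2.2.2.2)).card)
      = (((A ×ˢ A).filter (fun q => key q.1 = key q.2)).card) := by
    apply Finset.card_bij
      (fun p _ => ((p.1, p.2.2.1, p.2.2.2.2.1), (p.2.1, p.2.2.2.1, p.2.2.2.2.2)))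
    · rintro ⟨s1, s2, t1, t2, u1, u2⟩ hp
      simp only [Finset.mem_filter, Finset.mem_product, hA, hkey] at hp ⊢
      obtain ⟨⟨h1, h2, h3, h4, h5, h6⟩, heq⟩ := hp
      refine ⟨⟨⟨h1, h3, h5⟩, ⟨h2, h4, h6⟩⟩, ?_⟩
      rw [← sub_eq_zero] at heq ⊢
      rw [← heq]; abel
    · rintro ⟨s1, s2, t1, t2, u1, u2⟩ _ ⟨a1, a2, b1, b2, c1, c2⟩ _ h
      simp only [Prod.mk.injEq] at h
      obtain ⟨⟨e1, e2, e3⟩, e4, e5, e6⟩ := h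
      simp [e1, e2, e3, e4, e5, e6]
    · rintro ⟨⟨s1, t1, u1⟩, ⟨s2, t2, u2⟩⟩ hq
      refine ⟨(s1, s2, t1, t2, u1, u2), ?_, rfl⟩
      simp only [Finset.mem_filter, Finset.mem_product, hA, hkey] at hq ⊢
      obtain ⟨⟨⟨h1, h3, h5⟩, ⟨h2, h4, h6⟩⟩, heq⟩ := hq
      refine ⟨⟨h1, h2, h3, h4, h5, h6⟩, ?_⟩
      rw [← sub_eq_zero] at heq ⊢
      rw [← heq]; abel
  -- Step 2: fiberwise count
  have hfib : (((A ×ˢ A).filter (fun q => key q.1 = key q.2)).card)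
      = ∑ z : G, c z * c z := by
    have h := Finset.card_eq_sum_card_fiberwise
      (f := fun q : (G × G × G) × (G × G × G) => key q.1)
      (s := (A ×ˢ A).filter (fun q => key q.1 = key q.2)) (t := Finset.univ)
      (fun x _ => Finset.mem_univ _)
    rw [h]
    refine Finset.sum_congr rfl fun z _ => ?_
    have : ((A ×ˢ A).filter (fun q => key q.1 = key q.2)).filter
        (fun q => key q.1 = z)
        = (A.filter (fun p => key p = z)) ×ˢ (A.filter (fun p => key p = z)) := by
      ext ⟨a, b⟩
      simp only [Finset.mem_filter, Finset.mem_product]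
      constructor
      · rintro ⟨⟨⟨ha, hb⟩, he⟩, hz⟩
        exact ⟨⟨ha, hz⟩, hb, he ▸ hz⟩
      · rintro ⟨⟨ha, hz1⟩, hb, hz2⟩
        exact ⟨⟨⟨ha, hb⟩, hz1.trans hz2.symm⟩, hz1⟩
    rw [this, Finset.card_product, hc]
  rw [hbij, hfib]
  -- Cauchy–Schwarz
  have hcard : (0 : ℝ) < Fintype.card G := by
    exact_mod_cast Fintype.card_pos
  rw [div_le_iff₀ hcard]
  have hcs := sq_sum_le_card_mul_sum_sq (s := (Finset.univ : Finset G))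
    (f := fun z => (c z : ℝ))
  have hl : ((∑ z : G, (c z : ℝ)) ^ 2 : ℝ) = (n : ℝ) ^ 6 := by
    rw [← Nat.cast_sum, hsum]
    push_cast; ring
  have hr : ∑ z : G, ((c z : ℝ)) ^ 2 = ((∑ z : G, c z * c z : ℕ) : ℝ) := by
    push_cast; exact Finset.sum_congr rfl fun z _ => sq ((c z : ℝ))
  rw [hl, hr] at hcs
  simpa [Finset.card_univ, mul_comm] using hcs
end

section
/- Let G be a finite abelian group (written multiplicatively), n ≥ 1, and let S, T, U ⊆ G be subsets of size n with |S⁻¹T| = |T⁻¹U| = |S⁻¹U| = n². Let A ∈ {±1}^{S×T} and B ∈ {±1}^{T×U} have i.i.d. uniform ±1 entries, and let α ∈ {±1}^S, γ ∈ {±1}^T, β ∈ {±1}^U be uniform sign vectors, with A, B, α, β, γ all mutually independent. Define a, b : G → ℝ by a(s⁻¹t) = α_s·γ_t·A_{s,t} for (s,t) ∈ S×T and a = 0 elsewhere, b(t⁻¹u) = γ_t·β_u·B_{t,u} for (t,u) ∈ T×U and b = 0 elsewhere (these are well defined since |S⁻¹T| = |T⁻¹U| = n²). Let c(g) = Σ_{h∈G}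 a(h)·b(h⁻¹g) and C_{x,y} = α_x·β_y·c(x⁻¹y) for x ∈ S, y ∈ U. Then E[ Σ_{x∈S, y∈U} (C_{x,y} − (AB)_{x,y})² ] = Σ_{x∈S, y∈U} |Err_{x,y}| ≥ ρ_{n,G}(S,T,U) − n³, where (AB)_{x,y} = Σ_{t∈T} A_{x,t}·B_{t,y} and Err_{x,y} = {(s,t,t′,u) ∈ S×T×T×U : t ≠ t′ and s⁻¹tt′⁻¹u = x⁻¹y}. Consequently, the normalized expected squared error E[‖C − AB‖_F²] / (‖A‖_F²·‖B‖_F²) is at least (ρ_{n,G}(S,T,U) − n³)/n⁴. -/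
/-!
Expanding `c = a ∗ b`, the entry `C_{x,y}` is the sum of the sign monomials
`α_x β_y a(s⁻¹t) b(t'⁻¹u)` over the quadruples `(s, t, t', u)` with `s⁻¹ t t'⁻¹ u = x⁻¹ y`.
Since `(s, u) ↦ s⁻¹ u` is injective on `S × U`, the quadruples with `t = t'` are exactly the
`(x, t, t, y)`, and their monomials sum to `(AB)_{x,y}`. The remaining monomials, indexed by
`Err_{x,y}`, are orthonormal under the uniform measure: for two distinct ones, flipping a single
entry of `A` or `B` negates one and fixes the other. Hence the expected squared error is
`Σ |Err_{x,y}|`. Finally `s₁ s₂⁻¹ t₁ t₂⁻¹ = u₁ u₂⁻¹` is equivalent to `s₂⁻¹ t₁ t₂⁻¹ u₂ = s₁⁻¹ u₁`,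
so `ρ` counts all these quadruples, the `n³` diagonal ones included.
-/

open scoped Pointwise

/-- The sign `±1` associated to a Boolean. -/
noncomputable def sgn (x : Bool) : ℝ := if x then 1 else -1

open Finset

lemma sgn_mul_self (b : Bool) : sgn b * sgn b = 1 := by cases b <;> simp [sgn]

lemma sgn_sq (b : Bool) : sgn b ^ 2 = 1 := by rw [sq, sgn_mul_self]

lemma sgn_not (b : Bool) : sgn (!b) = -sgn b := by cases b <;> simp [sgn]

def flipAt {I : Type*} [DecidableEq I] (i : I) : Equiv.Perm (I → Bool) :=
  Function.Involutive.toPerm (fun f j => if j = i then !f j else f j) fun f => by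
    funext j; by_cases hj : j = i <;> simp [hj]

lemma sgn_flipAt {I : Type*} [DecidableEq I] (i : I) (f : I → Bool) (j : I) :
    sgn (flipAt i f j) = if j = i then -sgn (f j) else sgn (f j) := by
  change sgn (if j = i then !f j else f j) = _
  split_ifs <;> simp only [sgn_not]

lemma Fintype.sum_eq_zero_of_comp_perm_eq_neg {Ω : Type*} [Fintype Ω] (σ : Equiv.Perm Ω)
    {f : Ω → ℝ} (hf : ∀ ω, f (σ ω) = -f ω) : ∑ ω, f ω = 0 := by
  have h := Equiv.sum_comp σ f
  simp only [hf, sum_neg_distrib] at h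
  linarith

lemma sum_sq_sum_eq_of_orthogonal {Ω Q : Type*} [Fintype Ω] [DecidableEq Q] (w : Q → Ω → ℝ)
    (N : ℝ) (hw : ∀ q q', ∑ ω, w q ω * w q' ω = if q = q' then N else 0) (F : Finset Q) :
    ∑ ω, (∑ q ∈ F, w q ω) ^ 2 = N * #F := by
  simp_rw [sq, sum_mul_sum]
  rw [sum_comm]
  calc ∑ q ∈ F, ∑ ω, ∑ q' ∈ F, w q ω * w q' ω = ∑ q ∈ F, N := by
        refine sum_congr rfl fun q hq => ?_
        rw [sum_comm]
        simp_rw [hw, sum_ite_eq, if_pos hq]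
    _ = N * #F := by rw [sum_const, nsmul_eq_mul, mul_comm]

lemma sum_ite_mul_sum_ite_eq {G ι κ R : Type*} [Group G] [Fintype G] [DecidableEq G]
    [Fintype ι] [Fintype κ] [CommSemiring R] (f : ι → G) (g : κ → G) (a : ι → R) (b : κ → R)
    (x : G) :
    ∑ h : G, (∑ i, if f i = h then a i else 0) * (∑ k, if g k = h⁻¹ * x then b k else 0) =
      ∑ i, ∑ k, if f i * g k = x then a i * b k else 0 := by
  simp_rw [sum_mul, ite_mul, zero_mul]
  rw [sum_comm]
  refine sum_congr rfl fun i _ => ?_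
  simp_rw [sum_ite_eq, mem_univ, if_true, mul_sum, mul_ite, mul_zero, eq_inv_mul_iff_mul_eq]

lemma injective_inv_mul_of_card_inv_mul {G : Type*} [Group G] [DecidableEq G] {S U : Finset G}
    (h : #(S⁻¹ * U) = #S * #U) : Function.Injective fun p : S × U => (p.1 : G)⁻¹ * p.2 := by
  rw [← card_inv S, card_mul_iff] at h
  intro p q hpq
  have := @h ((p.1 : G)⁻¹, p.2) (by simp) ((q.1 : G)⁻¹, q.2) (by simp) hpq
  simp only [Prod.mk.injEq, inv_inj] at this
  exact Prod.ext (Subtype.ext this.1) (Subtype.ext this.2)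

lemma mul_inv_mul_mul_inv_eq_mul_inv_iff {G : Type*} [Group G] (s₁ s₂ t₁ t₂ u₁ u₂ : G) :
    s₁ * s₂⁻¹ * t₁ * t₂⁻¹ = u₁ * u₂⁻¹ ↔ s₂⁻¹ * t₁ * t₂⁻¹ * u₂ = s₁⁻¹ * u₁ := by
  constructor <;> intro h
  · calc s₂⁻¹ * t₁ * t₂⁻¹ * u₂ = s₁⁻¹ * (s₁ * s₂⁻¹ * t₁ * t₂⁻¹) * u₂ := by group
      _ = s₁⁻¹ * u₁ := by rw [h]; group
  · calc s₁ * s₂⁻¹ * t₁ * t₂⁻¹ = s₁ * (s₂⁻¹ * t₁ * t₂⁻¹ * u₂) * u₂⁻¹ := by group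
      _ = u₁ * u₂⁻¹ := by rw [h]; group

noncomputable section

section Sample

variable {G : Type*} {S T U : Finset G}

variable (S T U) in
/-- A sample `ω = (A, B, α, β, γ)`; `aEntry ω s t` is `a(s⁻¹t)` and `bEntry ω t u` is `b(t⁻¹u)`. -/
abbrev Sample := (S × T → Bool) × (T × U → Bool) × (S → Bool) × (U → Bool) × (T → Bool)

def aEntry (ω : Sample S T U) (s : S) (t : T) : ℝ :=
  sgn (ω.2.2.1 s) * sgn (ω.2.2.2.2 t) * sgn (ω.1 (s, t))

def bEntry (ω : Sample S T U) (t : T) (u : U) : ℝ :=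
  sgn (ω.2.2.2.2 t) * sgn (ω.2.2.2.1 u) * sgn (ω.2.1 (t, u))

def signMonomial (ω : Sample S T U) (x : S) (y : U) (q : S × T × T × U) : ℝ :=
  sgn (ω.2.2.1 x) * sgn (ω.2.2.2.1 y) * (aEntry ω q.1 q.2.1 * bEntry ω q.2.2.1 q.2.2.2)

lemma signMonomial_diag (ω : Sample S T U) (x : S) (y : U) (t : T) :
    signMonomial ω x y (x, t, t, y) = sgn (ω.1 (x, t)) * sgn (ω.2.1 (t, y)) := by
  simp only [signMonomial, aEntry, bEntry]
  ring_nf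
  simp only [sgn_sq, one_mul, mul_one]

lemma signMonomial_mul_self (ω : Sample S T U) (x : S) (y : U) (q : S × T × T × U) :
    signMonomial ω x y q * signMonomial ω x y q = 1 := by
  simp only [signMonomial, aEntry, bEntry]
  ring_nf
  simp only [sgn_sq, one_mul]

lemma sum_signMonomial_mul_signMonomial [DecidableEq G] (x : S) (y : U) (q q' : S × T × T × U) :
    ∑ ω : Sample S T U, signMonomial ω x y q * signMonomial ω x y q' =
      if q = q' then (Fintype.card (Sample S T U) : ℝ) else 0 := by
  obtain ⟨s, t, t₁, u⟩ := q
  obtain ⟨s', t', t₁', u'⟩ := q'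
  split_ifs with h
  · simp [← h, signMonomial_mul_self]
  by_cases hA : (s, t) = (s', t')
  · have hB : (t₁, u) ≠ (t₁', u') := fun hB => h (by simp_all)
    refine Fintype.sum_eq_zero_of_comp_perm_eq_neg
      ((Equiv.refl _).prodCongr ((flipAt (t₁, u)).prodCongr (Equiv.refl _))) fun ω => ?_
    simp [signMonomial, aEntry, bEntry, sgn_flipAt, Ne.symm hB]
  · refine Fintype.sum_eq_zero_of_comp_perm_eq_neg
      ((flipAt (s, t)).prodCongr (Equiv.refl _)) fun ω => ?_
    simp [signMonomial, aEntry, bEntry, sgn_flipAt, Ne.symm hA]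

end Sample

section Quadruples

variable {G : Type*} [Group G] [DecidableEq G] {S T U : Finset G}

def signalA (ω : Sample S T U) (g : G) : ℝ :=
  ∑ p : S × T, if (p.1 : G)⁻¹ * p.2 = g then aEntry ω p.1 p.2 else 0

def signalB (ω : Sample S T U) (g : G) : ℝ :=
  ∑ p : T × U, if (p.1 : G)⁻¹ * p.2 = g then bEntry ω p.1 p.2 else 0

def output [Fintype G] (ω : Sample S T U) (x : S) (y : U) : ℝ :=
  sgn (ω.2.2.1 x) * sgn (ω.2.2.2.1 y) *
    ∑ h : G, signalA ω h * signalB ω (h⁻¹ * ((x : G)⁻¹ * y))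

variable (T) in
def quadruples (x : S) (y : U) : Finset (S × T × T × U) :=
  univ.filter fun q => (q.1 : G)⁻¹ * q.2.1 * (q.2.2.1 : G)⁻¹ * q.2.2.2 = (x : G)⁻¹ * y

variable (T) in
def errQuadruples (x : S) (y : U) : Finset (S × T × T × U) :=
  univ.filter fun q => q.2.1 ≠ q.2.2.1 ∧
    (q.1 : G)⁻¹ * (q.2.1 : G) * (q.2.2.1 : G)⁻¹ * (q.2.2.2 : G) = (x : G)⁻¹ * (y : G)

variable (T) in
def diagEmb (x : S) (y : U) : T ↪ S × T × T × U :=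
  ⟨fun t => (x, t, t, y), fun t t' h => by simpa using h⟩

lemma output_eq_sum_quadruples [Fintype G] (ω : Sample S T U) (x : S) (y : U) :
    output ω x y = ∑ q ∈ quadruples T x y, signMonomial ω x y q := by
  simp only [output, signalA, signalB]
  rw [sum_ite_mul_sum_ite_eq, quadruples, sum_filter, mul_sum]
  simp only [Fintype.sum_prod_type, mul_sum, mul_ite, mul_zero, signMonomial, mul_assoc]

lemma filter_quadruples_eq_map (hSU : Function.Injective fun p : S × U => (p.1 : G)⁻¹ * p.2)
    (x : S) (y : U) :
    (quadruples T x y).filter (fun q => ¬q.2.1 ≠ q.2.2.1) = univ.map (diagEmb T x y) := by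
  ext ⟨s, t, t', u⟩
  simp only [quadruples, diagEmb, not_not, mem_filter, mem_univ, true_and, mem_map]
  constructor
  · rintro ⟨h, rfl⟩
    obtain ⟨rfl, rfl⟩ : s = x ∧ u = y := by
      simpa using @hSU (s, u) (x, y) (by simpa [mul_assoc] using h)
    exact ⟨t, rfl⟩
  · rintro ⟨t, ⟨⟩⟩
    simp [mul_assoc]

lemma sum_quadruples_eq (hSU : Function.Injective fun p : S × U => (p.1 : G)⁻¹ * p.2)
    (x : S) (y : U) (f : S × T × T × U → ℝ) :
    ∑ q ∈ quadruples T x y, f q = ∑ q ∈ errQuadruples T x y, f q + ∑ t, f (x, t, t, y) := by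
  rw [← sum_filter_add_sum_filter_not _ (fun q => q.2.1 ≠ q.2.2.1),
    filter_quadruples_eq_map hSU, sum_map]
  congr 2
  ext q
  simp [quadruples, errQuadruples, and_comm]

lemma output_sub_eq_sum_signMonomial [Fintype G]
    (hSU : Function.Injective fun p : S × U => (p.1 : G)⁻¹ * p.2)
    (ω : Sample S T U) (x : S) (y : U) :
    output ω x y - ∑ t, sgn (ω.1 (x, t)) * sgn (ω.2.1 (t, y)) =
      ∑ q ∈ errQuadruples T x y, signMonomial ω x y q := by
  simp only [output_eq_sum_quadruples, sum_quadruples_eq hSU, signMonomial_diag,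
    add_sub_cancel_right]

lemma card_quadruples (hSU : Function.Injective fun p : S × U => (p.1 : G)⁻¹ * p.2)
    (x : S) (y : U) : #(quadruples T x y) = #(errQuadruples T x y) + #T := by
  have := sum_quadruples_eq hSU x y (fun _ : S × T × T × U => (1 : ℝ))
  simp only [sum_const, nsmul_eq_mul, mul_one, card_univ, Fintype.card_coe] at this
  exact_mod_cast this

lemma sum_sum_sum_sq_output_sub_eq [Fintype G]
    (hSU : Function.Injective fun p : S × U => (p.1 : G)⁻¹ * p.2) :
    ∑ ω : Sample S T U, ∑ x, ∑ y, (output ω x y - ∑ t, sgn (ω.1 (x, t)) * sgn (ω.2.1 (t, y))) ^ 2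
      = Fintype.card (Sample S T U) * ∑ x : S, ∑ y : U, (#(errQuadruples T x y) : ℝ) := by
  simp_rw [output_sub_eq_sum_signMonomial hSU]
  rw [mul_sum, sum_comm]
  refine sum_congr rfl fun x _ => ?_
  rw [mul_sum, sum_comm]
  exact sum_congr rfl fun y _ =>
    sum_sq_sum_eq_of_orthogonal _ _ (sum_signMonomial_mul_signMonomial x y) _

variable (S T U) in
lemma card_filter_product_eq_sum_card_quadruples :
    #((S ×ˢ S ×ˢ T ×ˢ T ×ˢ U ×ˢ U).filter fun p : G × G × G × G × G × G =>
        p.1 * p.2.1⁻¹ * p.2.2.1 * p.2.2.2.1⁻¹ = p.2.2.2.2.1 * p.2.2.2.2.2⁻¹) =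
      ∑ x : S, ∑ y : U, #(quadruples T x y) := by
  rw [← Fintype.sum_prod_type' (f := fun x y => #(quadruples T x y)), ← card_sigma]
  symm
  refine card_bij (fun r _ => ((r.1.1 : G), (r.2.1 : G), (r.2.2.1 : G), (r.2.2.2.1 : G),
    (r.1.2 : G), (r.2.2.2.2 : G))) ?_ ?_ ?_
  · rintro ⟨⟨x, y⟩, s, t, t', u⟩ h
    simp only [mem_sigma, mem_univ, quadruples, mem_filter, true_and] at h
    simp only [mem_filter, mem_product, mul_inv_mul_mul_inv_eq_mul_inv_iff, h, coe_mem, and_self]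
  · rintro ⟨⟨x, y⟩, s, t, t', u⟩ _ ⟨⟨x', y'⟩, s', t'', t''', u'⟩ _ h
    simp only [Prod.mk.injEq, ← Subtype.ext_iff] at h
    obtain ⟨rfl, rfl, rfl, rfl, rfl, rfl⟩ := h
    rfl
  · rintro ⟨s₁, s₂, t₁, t₂, u₁, u₂⟩ h
    simp only [mem_filter, mem_product, mul_inv_mul_mul_inv_eq_mul_inv_iff] at h
    obtain ⟨⟨hs₁, hs₂, ht₁, ht₂, hu₁, hu₂⟩, h⟩ := h
    exact ⟨⟨(⟨s₁, hs₁⟩, ⟨u₁, hu₁⟩), ⟨s₂, hs₂⟩, ⟨t₁, ht₁⟩, ⟨t₂, ht₂⟩, ⟨u₂, hu₂⟩⟩,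
      by simpa [quadruples] using h, rfl⟩

end Quadruples

end

theorem statement2_general {G : Type*} [Group G] [Fintype G] [DecidableEq G]
    (n : ℕ) (S T U : Finset G)
    (hSc : S.card = n) (hTc : T.card = n) (hUc : U.card = n)
    (hSU : (S⁻¹ * U).card = n ^ 2)
    -- the `a`-signal, `b`-signal, convolution and output, as functions of the sample
    (a : (({x // x ∈ S} × {x // x ∈ T} → Bool) × ({x // x ∈ T} × {x // x ∈ U} → Bool) ×
        ({x // x ∈ S} → Bool) × ({x // x ∈ U} → Bool) × ({x // x ∈ T} → Bool)) → G → ℝ)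
    (b : (({x // x ∈ S} × {x // x ∈ T} → Bool) × ({x // x ∈ T} × {x // x ∈ U} → Bool) ×
        ({x // x ∈ S} → Bool) × ({x // x ∈ U} → Bool) × ({x // x ∈ T} → Bool)) → G → ℝ)
    (c : (({x // x ∈ S} × {x // x ∈ T} → Bool) × ({x // x ∈ T} × {x // x ∈ U} → Bool) ×
        ({x // x ∈ S} → Bool) × ({x // x ∈ U} → Bool) × ({x // x ∈ T} → Bool)) → G → ℝ)
    (C : (({x // x ∈ S} × {x // x ∈ T} → Bool) × ({x // x ∈ T} × {x // x ∈ U} → Bool) ×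
        ({x // x ∈ S} → Bool) × ({x // x ∈ U} → Bool) × ({x // x ∈ T} → Bool)) →
        {x // x ∈ S} → {x // x ∈ U} → ℝ)
    (ha : ∀ ω g, a ω g = ∑ s : {x // x ∈ S}, ∑ t : {x // x ∈ T},
      if (s : G)⁻¹ * (t : G) = g
        then sgn (ω.2.2.1 s) * sgn (ω.2.2.2.2 t) * sgn (ω.1 (s, t)) else 0)
    (hb : ∀ ω g, b ω g = ∑ t : {x // x ∈ T}, ∑ u : {x // x ∈ U},
      if (t : G)⁻¹ * (u : G) = g
        then sgn (ω.2.2.2.2 t) * sgn (ω.2.2.2.1 u) * sgn (ω.2.1 (t, u)) else 0)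
    (hc : ∀ ω g, c ω g = ∑ h : G, a ω h * b ω (h⁻¹ * g))
    (hC : ∀ ω x y, C ω x y =
      sgn (ω.2.2.1 x) * sgn (ω.2.2.2.1 y) * c ω ((x : G)⁻¹ * (y : G)))
    -- the expected squared Frobenius error
    (E : ℝ)
    (hE : E = (∑ ω : (({x // x ∈ S} × {x // x ∈ T} → Bool) ×
          ({x // x ∈ T} × {x // x ∈ U} → Bool) × ({x // x ∈ S} → Bool) ×
          ({x // x ∈ U} → Bool) × ({x // x ∈ T} → Bool)),
        ∑ x : {x // x ∈ S}, ∑ y : {x // x ∈ U},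
          (C ω x y - ∑ t : {x // x ∈ T}, sgn (ω.1 (x, t)) * sgn (ω.2.1 (t, y))) ^ 2)
      / (Fintype.card ((({x // x ∈ S} × {x // x ∈ T} → Bool) ×
          ({x // x ∈ T} × {x // x ∈ U} → Bool) × ({x // x ∈ S} → Bool) ×
          ({x // x ∈ U} → Bool) × ({x // x ∈ T} → Bool))) : ℝ))
    -- the approximate triple product quantity
    (ρ : ℕ)
    (hρ : ρ = ((S ×ˢ S ×ˢ T ×ˢ T ×ˢ U ×ˢ U).filter
        (fun p : G × G × G × G × G × G =>
          p.1 * p.2.1⁻¹ * p.2.2.1 * p.2.2.2.1⁻¹ = p.2.2.2.2.1 * p.2.2.2.2.2⁻¹)).card) :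
    E = (∑ x : {x // x ∈ S}, ∑ y : {x // x ∈ U},
        ((Finset.univ.filter
            (fun q : {x // x ∈ S} × {x // x ∈ T} × {x // x ∈ T} × {x // x ∈ U} =>
              q.2.1 ≠ q.2.2.1 ∧
                (q.1 : G)⁻¹ * (q.2.1 : G) * (q.2.2.1 : G)⁻¹ * (q.2.2.2 : G) =
                  (x : G)⁻¹ * (y : G))).card : ℝ)) ∧
    (ρ : ℝ) - (n : ℝ) ^ 3 ≤
      (∑ x : {x // x ∈ S}, ∑ y : {x // x ∈ U},
        ((Finset.univ.filter
            (fun q : {x // x ∈ S} × {x // x ∈ T} × {x // x ∈ T} × {x // x ∈ U} =>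
              q.2.1 ≠ q.2.2.1 ∧
                (q.1 : G)⁻¹ * (q.2.1 : G) * (q.2.2.1 : G)⁻¹ * (q.2.2.2 : G) =
                  (x : G)⁻¹ * (y : G))).card : ℝ)) ∧
    ∀ ω : (({x // x ∈ S} × {x // x ∈ T} → Bool) × ({x // x ∈ T} × {x // x ∈ U} → Bool) ×
        ({x // x ∈ S} → Bool) × ({x // x ∈ U} → Bool) × ({x // x ∈ T} → Bool)),
      ((ρ : ℝ) - (n : ℝ) ^ 3) / (n : ℝ) ^ 4 ≤
        E / ((∑ s : {x // x ∈ S}, ∑ t : {x // x ∈ T}, sgn (ω.1 (s, t)) ^ 2) *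
          (∑ t : {x // x ∈ T}, ∑ u : {x // x ∈ U}, sgn (ω.2.1 (t, u)) ^ 2)) := by
  have hinj := injective_inv_mul_of_card_inv_mul (S := S) (U := U) (by rw [hSU, hSc, hUc, sq])
  have hC_eq_output : ∀ ω x y, C ω x y = output ω x y := by
    intro ω x y
    simp only [hC, hc, ha, hb, output, signalA, signalB, aEntry, bEntry, Fintype.sum_prod_type]
  have hE' : E = ∑ x : S, ∑ y : U, (#(errQuadruples T x y) : ℝ) := by
    simp only [hE, hC_eq_output, sum_sum_sum_sq_output_sub_eq hinj]
    field_simp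
  have hρ' : ρ = n ^ 3 + ∑ x : S, ∑ y : U, #(errQuadruples T x y) := by
    simp only [hρ, card_filter_product_eq_sum_card_quadruples, card_quadruples hinj,
      sum_add_distrib, sum_const, card_univ, Fintype.card_coe, hSc, hTc, hUc, smul_eq_mul]
    ring
  have hρE : (ρ : ℝ) - n ^ 3 = E := by rw [hE', hρ']; push_cast; ring
  refine ⟨hE', (hρE.trans hE').le, fun ω => ?_⟩
  simp only [sgn_sq, sum_const, card_univ, Fintype.card_coe, hSc, hTc, hUc, nsmul_eq_mul,
    mul_one]
  rw [hρE]
  exact le_of_eq (by ring)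

/-- Lower bound on the expected error of the randomized PolyForm scheme.
`G` is a finite group, `S, T, U ⊆ G` have size `n` with `|S⁻¹T| = |T⁻¹U| = |S⁻¹U| = n²`.
The sample space `Ω` consists of uniform independent choices of sign matrices
`A ∈ {±1}^{S×T}`, `B ∈ {±1}^{T×U}` and sign vectors `α ∈ {±1}^S, β ∈ {±1}^U, γ ∈ {±1}^T`.
With `a(s⁻¹t) = α_s γ_t A_{s,t}`, `b(t⁻¹u) = γ_t β_u B_{t,u}`, `c = a∗b`,
`C_{x,y} = α_x β_y c(x⁻¹y)`, the expected squared Frobenius error equals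
`Σ_{x,y} |Err_{x,y}| ≥ ρ_{n,G}(S,T,U) − n³`, and the normalized expected error is at
least `(ρ_{n,G}(S,T,U) − n³)/n⁴`. -/
theorem statement2 {G : Type*} [Group G] [Fintype G] [DecidableEq G]
    (n : ℕ) (hn : 1 ≤ n) (S T U : Finset G)
    (hSc : S.card = n) (hTc : T.card = n) (hUc : U.card = n)
    (hST : (S⁻¹ * T).card = n ^ 2) (hTU : (T⁻¹ * U).card = n ^ 2)
    (hSU : (S⁻¹ * U).card = n ^ 2)
    -- the `a`-signal, `b`-signal, convolution and output, as functions of the sample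
    (a : (({x // x ∈ S} × {x // x ∈ T} → Bool) × ({x // x ∈ T} × {x // x ∈ U} → Bool) ×
        ({x // x ∈ S} → Bool) × ({x // x ∈ U} → Bool) × ({x // x ∈ T} → Bool)) → G → ℝ)
    (b : (({x // x ∈ S} × {x // x ∈ T} → Bool) × ({x // x ∈ T} × {x // x ∈ U} → Bool) ×
        ({x // x ∈ S} → Bool) × ({x // x ∈ U} → Bool) × ({x // x ∈ T} → Bool)) → G → ℝ)
    (c : (({x // x ∈ S} × {x // x ∈ T} → Bool) × ({x // x ∈ T} × {x // x ∈ U} → Bool) ×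
        ({x // x ∈ S} → Bool) × ({x // x ∈ U} → Bool) × ({x // x ∈ T} → Bool)) → G → ℝ)
    (C : (({x // x ∈ S} × {x // x ∈ T} → Bool) × ({x // x ∈ T} × {x // x ∈ U} → Bool) ×
        ({x // x ∈ S} → Bool) × ({x // x ∈ U} → Bool) × ({x // x ∈ T} → Bool)) →
        {x // x ∈ S} → {x // x ∈ U} → ℝ)
    (ha : ∀ ω g, a ω g = ∑ s : {x // x ∈ S}, ∑ t : {x // x ∈ T},
      if (s : G)⁻¹ * (t : G) = g
        then sgn (ω.2.2.1 s) * sgn (ω.2.2.2.2 t) * sgn (ω.1 (s, t)) else 0)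
    (hb : ∀ ω g, b ω g = ∑ t : {x // x ∈ T}, ∑ u : {x // x ∈ U},
      if (t : G)⁻¹ * (u : G) = g
        then sgn (ω.2.2.2.2 t) * sgn (ω.2.2.2.1 u) * sgn (ω.2.1 (t, u)) else 0)
    (hc : ∀ ω g, c ω g = ∑ h : G, a ω h * b ω (h⁻¹ * g))
    (hC : ∀ ω x y, C ω x y =
      sgn (ω.2.2.1 x) * sgn (ω.2.2.2.1 y) * c ω ((x : G)⁻¹ * (y : G)))
    -- the expected squared Frobenius error
    (E : ℝ)
    (hE : E = (∑ ω : (({x // x ∈ S} × {x // x ∈ T} → Bool) ×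
          ({x // x ∈ T} × {x // x ∈ U} → Bool) × ({x // x ∈ S} → Bool) ×
          ({x // x ∈ U} → Bool) × ({x // x ∈ T} → Bool)),
        ∑ x : {x // x ∈ S}, ∑ y : {x // x ∈ U},
          (C ω x y - ∑ t : {x // x ∈ T}, sgn (ω.1 (x, t)) * sgn (ω.2.1 (t, y))) ^ 2)
      / (Fintype.card ((({x // x ∈ S} × {x // x ∈ T} → Bool) ×
          ({x // x ∈ T} × {x // x ∈ U} → Bool) × ({x // x ∈ S} → Bool) ×
          ({x // x ∈ U} → Bool) × ({x // x ∈ T} → Bool))) : ℝ))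
    -- the approximate triple product quantity
    (ρ : ℕ)
    (hρ : ρ = ((S ×ˢ S ×ˢ T ×ˢ T ×ˢ U ×ˢ U).filter
        (fun p : G × G × G × G × G × G =>
          p.1 * p.2.1⁻¹ * p.2.2.1 * p.2.2.2.1⁻¹ = p.2.2.2.2.1 * p.2.2.2.2.2⁻¹)).card) :
    E = (∑ x : {x // x ∈ S}, ∑ y : {x // x ∈ U},
        ((Finset.univ.filter
            (fun q : {x // x ∈ S} × {x // x ∈ T} × {x // x ∈ T} × {x // x ∈ U} =>
              q.2.1 ≠ q.2.2.1 ∧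
                (q.1 : G)⁻¹ * (q.2.1 : G) * (q.2.2.1 : G)⁻¹ * (q.2.2.2 : G) =
                  (x : G)⁻¹ * (y : G))).card : ℝ)) ∧
    (ρ : ℝ) - (n : ℝ) ^ 3 ≤
      (∑ x : {x // x ∈ S}, ∑ y : {x // x ∈ U},
        ((Finset.univ.filter
            (fun q : {x // x ∈ S} × {x // x ∈ T} × {x // x ∈ T} × {x // x ∈ U} =>
              q.2.1 ≠ q.2.2.1 ∧
                (q.1 : G)⁻¹ * (q.2.1 : G) * (q.2.2.1 : G)⁻¹ * (q.2.2.2 : G) =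
                  (x : G)⁻¹ * (y : G))).card : ℝ)) ∧
    ∀ ω : (({x // x ∈ S} × {x // x ∈ T} → Bool) × ({x // x ∈ T} × {x // x ∈ U} → Bool) ×
        ({x // x ∈ S} → Bool) × ({x // x ∈ U} → Bool) × ({x // x ∈ T} → Bool)),
      ((ρ : ℝ) - (n : ℝ) ^ 3) / (n : ℝ) ^ 4 ≤
        E / ((∑ s : {x // x ∈ S}, ∑ t : {x // x ∈ T}, sgn (ω.1 (s, t)) ^ 2) *
          (∑ t : {x // x ∈ T}, ∑ u : {x // x ∈ U}, sgn (ω.2.1 (t, u)) ^ 2)) :=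
  statement2_general n S T U hSc hTc hUc hSU a b c C ha hb hc hC E hE ρ hρ
end

section
/- Let n ≥ 2 and 2 ≤ r ≤ n with r dividing n, let G = ℤ_{rn²}, and set S = {rn·i : 0 ≤ i < n}, T = {(r−1)·i : 0 ≤ i < n}, U = {r·i : 0 ≤ i < n}. Then the number of 6-tuples (s₁,s₂,t₁,t₂,u₁,u₂) ∈ S² × T² × U² satisfying s₁ − s₂ + t₁ − t₂ = u₁ − u₂ in ℤ_{rn²} equals n³·(n/r). In other words, ρ_{n,G}(S,T,U) = n³·⌊n/r⌋. -/
/-!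
Write `s₁ = rna`, `s₂ = rnb`, `t₁ = (r-1)c`, `t₂ = (r-1)d`, `u₁ = re`, `u₂ = rf` with all indices
in `[0, n)`. The equation becomes `r(na - e) ≡ r(nb - f) - (r-1)(c - d) (mod rn²)`. Reducing
mod `r` forces `c ≡ d (mod r)`; conversely, once this holds, the pair `(a, e)` is determined by
`(b, c, d, f)`, because the numbers `na - e` with `0 ≤ a, e < n` form a complete residue system
mod `n²`. So the count is `n²` choices of `(b, f)` times the `n · (n/r)` pairs `c ≡ d (mod r)`.
-/

open Finset

lemma natCast_mul_injOn {m k n : ℕ} (hk : 0 < k) (hkn : k * n ≤ m) :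
    Set.InjOn (fun i : ℕ => ((k * i : ℕ) : ZMod m)) (range n) := by
  intro i hi j hj hij
  have hlt : ∀ l ∈ (range n : Set ℕ), k * l < m := fun l hl =>
    ((Nat.mul_lt_mul_left hk).2 (mem_range.1 hl)).trans_le hkn
  rw [ZMod.natCast_eq_natCast_iff', Nat.mod_eq_of_lt (hlt i hi), Nat.mod_eq_of_lt (hlt j hj)]
    at hij
  exact Nat.eq_of_mul_eq_mul_left hk hij

lemma eq_of_mul_sub_modEq {n a e a' e' : ℕ} (ha : a < n) (he : e < n) (ha' : a' < n)
    (he' : e' < n) (h : (n * a - e : ℤ) ≡ n * a' - e' [ZMOD n ^ 2]) : a = a' ∧ e = e' := by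
  obtain ⟨k, hk⟩ := h.dvd
  obtain rfl : e = e' := by
    have : (e : ℤ) - e' = 0 := Int.eq_zero_of_abs_lt_dvd
      ⟨n * k - (a' - a), by linear_combination hk⟩ (Int.abs_sub_lt_of_lt_lt he' he)
    omega
  have hn : (n : ℤ) ≠ 0 := by omega
  have : (a' : ℤ) - a = 0 := Int.eq_zero_of_abs_lt_dvd
    ⟨k, mul_left_cancel₀ hn (by linear_combination hk)⟩ (Int.abs_sub_lt_of_lt_lt ha ha')
  omega

lemma exists_mul_sub_modEq {n : ℕ} (hn : 0 < n) (z : ℤ) :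
    ∃ a < n, ∃ e < n, (n * a - e : ℤ) ≡ z [ZMOD n ^ 2] := by
  have hn' : (0 : ℤ) < n := by exact_mod_cast hn
  obtain ⟨e, he⟩ := Int.eq_ofNat_of_zero_le (Int.emod_nonneg (-z) hn'.ne')
  obtain ⟨q, hq⟩ : ∃ q : ℤ, z + e = n * q :=
    ⟨-((-z) / n), by linear_combination Int.mul_ediv_add_emod (-z) n - he⟩
  obtain ⟨a, ha⟩ := Int.eq_ofNat_of_zero_le (Int.emod_nonneg q hn'.ne')
  refine ⟨a, by have := Int.emod_lt_of_pos q hn'; omega,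
    e, by have := Int.emod_lt_of_pos (-z) hn'; omega, ?_⟩
  refine Int.modEq_iff_dvd.2 ⟨q / n, ?_⟩
  linear_combination hq - n * Int.mul_ediv_add_emod q n + n * ha

lemma card_filter_mul_sub_modEq {n : ℕ} (hn : 0 < n) (z : ℤ) :
    #{p ∈ range n ×ˢ range n | (n * p.1 - p.2 : ℤ) ≡ z [ZMOD n ^ 2]} = 1 := by
  obtain ⟨a, ha, e, he, hz⟩ := exists_mul_sub_modEq hn z
  rw [card_eq_one]
  refine ⟨(a, e), eq_singleton_iff_unique_mem.2 ⟨by simp [ha, he, hz], ?_⟩⟩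
  rintro ⟨a', e'⟩ hp
  simp only [mem_filter, mem_product, mem_range] at hp
  obtain ⟨rfl, rfl⟩ := eq_of_mul_sub_modEq ha he hp.1.1 hp.1.2 (hz.trans hp.2.symm)
  rfl

lemma card_filter_mul_sub_modEq_mul {n r : ℕ} (hn : 0 < n) (hr : 0 < r) (y : ℤ) :
    #{p ∈ range n ×ˢ range n | (r * n * p.1 - r * p.2 : ℤ) ≡ y [ZMOD r * n ^ 2]} =
      if (r : ℤ) ∣ y then 1 else 0 := by
  have hrn (p : ℕ × ℕ) : (r * n * p.1 - r * p.2 : ℤ) = r * (n * p.1 - p.2) := by ring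
  split_ifs with hy
  · obtain ⟨z, rfl⟩ := hy
    simp_rw [hrn, Int.ModEq.mul_left_cancel_iff' (by positivity : (r : ℤ) ≠ 0)]
    exact card_filter_mul_sub_modEq hn z
  · rw [card_eq_zero, filter_eq_empty_iff]
    intro p _ hp
    exact hy (((hp.of_mul_right _).dvd_iff).1 ⟨_, hrn p⟩)

lemma natCast_sub_eq_iff_modEq {n r : ℕ} (hr : 1 ≤ r) (a b c d e f : ℕ) :
    ((r * n * a : ℕ) : ZMod (r * n ^ 2)) - (r * n * b : ℕ) + ((r - 1) * c : ℕ) - ((r - 1) * d : ℕ)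
        = (r * e : ℕ) - (r * f : ℕ) ↔
      (r * n * a - r * e : ℤ) ≡ r * (n * b - f - c + d) + (c - d) [ZMOD r * n ^ 2] := by
  rw [show ((r : ℤ) * n ^ 2) = ((r * n ^ 2 : ℕ) : ℤ) by push_cast; ring,
    ← ZMod.intCast_eq_intCast_iff]
  push_cast [Nat.cast_sub hr]
  constructor <;> intro h <;> linear_combination h

lemma card_filter_natCast_sub_eq {n r : ℕ} (hn : 0 < n) (hr : 0 < r) (b c d f : ℕ) :
    #{p ∈ range n ×ˢ range n | ((r * n * p.1 : ℕ) : ZMod (r * n ^ 2)) - (r * n * b : ℕ) +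
        ((r - 1) * c : ℕ) - ((r - 1) * d : ℕ) = (r * p.2 : ℕ) - (r * f : ℕ)} =
      if d ≡ c [MOD r] then 1 else 0 := by
  simp_rw [natCast_sub_eq_iff_modEq hr, card_filter_mul_sub_modEq_mul hn hr,
    dvd_add_right (dvd_mul_right _ _), Nat.modEq_iff_dvd]

lemma card_filter_modEq_range {n r : ℕ} (hr : 0 < r) (h : r ∣ n) (c : ℕ) :
    #{d ∈ range n | d ≡ c [MOD r]} = n / r := by
  rw [← Nat.count_eq_card_filter_range, Nat.count_modEq_card _ hr, Nat.mod_eq_zero_of_dvd h]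
  simp

lemma sum_ite_modEq_range {n r : ℕ} (hr : 0 < r) (h : r ∣ n) :
    ∑ x ∈ range n ×ˢ range n ×ˢ range n ×ˢ range n,
      (if x.2.2.2 ≡ x.2.2.1 [MOD r] then 1 else 0) = n ^ 3 * (n / r) := by
  simp only [sum_product]
  simp only [sum_boole, Nat.cast_id, card_filter_modEq_range hr h, sum_const, card_range,
    smul_eq_mul]
  ring

lemma card_filter_product {α β : Type*} (s : Finset α) (t : Finset β) (P : α × β → Prop)
    [DecidablePred P] : #{x ∈ s ×ˢ t | P x} = ∑ a ∈ s, #{b ∈ t | P (a, b)} := by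
  simp only [card_filter, sum_product]

-- Index tuples are grouped as `((b, f, c, d), (a, e))`: the pair `(a, e)` is the one solved for.
lemma card_filter_image_sextuple {ι G : Type*} [DecidableEq G] {s : Finset ι} {σ τ υ : ι → G}
    (hσ : Set.InjOn σ s) (hτ : Set.InjOn τ s) (hυ : Set.InjOn υ s)
    (P : G × G × G × G × G × G → Prop) [DecidablePred P] :
    #{p ∈ s.image σ ×ˢ s.image σ ×ˢ s.image τ ×ˢ s.image τ ×ˢ s.image υ ×ˢ s.image υ | P p} =
      #{x ∈ (s ×ˢ s ×ˢ s ×ˢ s) ×ˢ (s ×ˢ s) |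
        P (σ x.2.1, σ x.1.1, τ x.1.2.2.1, τ x.1.2.2.2, υ x.2.2, υ x.1.2.1)} := by
  symm
  refine card_nbij (fun x => (σ x.2.1, σ x.1.1, τ x.1.2.2.1, τ x.1.2.2.2, υ x.2.2, υ x.1.2.1))
    ?_ ?_ ?_
  · rintro ⟨⟨b, f, c, d⟩, a, e⟩ hx
    simp only [coe_filter, mem_product, Set.mem_ofPred_eq] at hx ⊢
    obtain ⟨⟨⟨hb, hf, hc, hd⟩, ha, he⟩, hP⟩ := hx
    exact ⟨⟨mem_image_of_mem σ ha, mem_image_of_mem σ hb, mem_image_of_mem τ hc,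
      mem_image_of_mem τ hd, mem_image_of_mem υ he, mem_image_of_mem υ hf⟩, hP⟩
  · rintro ⟨⟨b, f, c, d⟩, a, e⟩ hx ⟨⟨b', f', c', d'⟩, a', e'⟩ hx' h
    simp only [coe_filter, mem_product, Set.mem_ofPred_eq] at hx hx'
    simp only [Prod.mk.injEq] at h ⊢
    obtain ⟨⟨⟨hb, hf, hc, hd⟩, ha, he⟩, -⟩ := hx
    obtain ⟨⟨⟨hb', hf', hc', hd'⟩, ha', he'⟩, -⟩ := hx'
    obtain ⟨h₁, h₂, h₃, h₄, h₅, h₆⟩ := h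
    exact ⟨⟨hσ hb hb' h₂, hυ hf hf' h₆, hτ hc hc' h₃, hτ hd hd' h₄⟩, hσ ha ha' h₁, hυ he he' h₅⟩
  · rintro ⟨s₁, s₂, t₁, t₂, u₁, u₂⟩ hp
    simp only [coe_filter, mem_product, mem_image] at hp
    obtain ⟨⟨⟨a, ha, rfl⟩, ⟨b, hb, rfl⟩, ⟨c, hc, rfl⟩, ⟨d, hd, rfl⟩, ⟨e, he, rfl⟩, ⟨f, hf, rfl⟩⟩,
      hP⟩ := hp
    exact ⟨((b, f, c, d), (a, e)), by simp [*], rfl⟩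

theorem statement4_general (n r : ℕ) (hn : 2 ≤ n) (hr : 2 ≤ r) (hdvd : r ∣ n)
    (S T U : Finset (ZMod (r * n ^ 2)))
    (hS : S = (Finset.range n).image (fun i => ((r * n * i : ℕ) : ZMod (r * n ^ 2))))
    (hT : T = (Finset.range n).image (fun i => (((r - 1) * i : ℕ) : ZMod (r * n ^ 2))))
    (hU : U = (Finset.range n).image (fun i => ((r * i : ℕ) : ZMod (r * n ^ 2)))) :
    ((S ×ˢ S ×ˢ T ×ˢ T ×ˢ U ×ˢ U).filter
        (fun p : ZMod (r * n ^ 2) × ZMod (r * n ^ 2) × ZMod (r * n ^ 2) ×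
            ZMod (r * n ^ 2) × ZMod (r * n ^ 2) × ZMod (r * n ^ 2) =>
          p.1 - p.2.1 + p.2.2.1 - p.2.2.2.1 = p.2.2.2.2.1 - p.2.2.2.2.2)).card
      = n ^ 3 * (n / r) := by
  subst hS hT hU
  have hn0 : 0 < n := by omega
  have hr0 : 0 < r := by omega
  have hnn : n ≤ n ^ 2 := Nat.le_self_pow two_ne_zero n
  rw [card_filter_image_sextuple (natCast_mul_injOn (by positivity) (by rw [sq, mul_assoc]))
    (natCast_mul_injOn (by omega) (Nat.mul_le_mul (Nat.sub_le r 1) hnn))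
    (natCast_mul_injOn hr0 (Nat.mul_le_mul_left r hnn)), card_filter_product]
  rw [sum_congr rfl fun x _ => card_filter_natCast_sub_eq hn0 hr0 x.1 x.2.2.1 x.2.2.2 x.2.1]
  exact sum_ite_modEq_range hr0 hdvd

/-- For `2 ≤ r ≤ n` with `r ∣ n`, in `G = ℤ_{rn²}` with
`S = {rn·i : 0 ≤ i < n}`, `T = {(r-1)·i : 0 ≤ i < n}`, `U = {r·i : 0 ≤ i < n}`,
the number of 6-tuples `(s₁,s₂,t₁,t₂,u₁,u₂) ∈ S² × T² × U²` with
`s₁ - s₂ + t₁ - t₂ = u₁ - u₂` equals `n³·(n/r)`, i.e.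
`ρ_{n,G}(S,T,U) = n³·⌊n/r⌋`. -/
theorem statement4 (n r : ℕ) (hn : 2 ≤ n) (hr : 2 ≤ r) (hrn : r ≤ n) (hdvd : r ∣ n)
    (S T U : Finset (ZMod (r * n ^ 2)))
    (hS : S = (Finset.range n).image (fun i => ((r * n * i : ℕ) : ZMod (r * n ^ 2))))
    (hT : T = (Finset.range n).image (fun i => (((r - 1) * i : ℕ) : ZMod (r * n ^ 2))))
    (hU : U = (Finset.range n).image (fun i => ((r * i : ℕ) : ZMod (r * n ^ 2)))) :
    ((S ×ˢ S ×ˢ T ×ˢ T ×ˢ U ×ˢ U).filter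
        (fun p : ZMod (r * n ^ 2) × ZMod (r * n ^ 2) × ZMod (r * n ^ 2) ×
            ZMod (r * n ^ 2) × ZMod (r * n ^ 2) × ZMod (r * n ^ 2) =>
          p.1 - p.2.1 + p.2.2.1 - p.2.2.2.1 = p.2.2.2.2.1 - p.2.2.2.2.2)).card
      = n ^ 3 * (n / r) :=
  statement4_general n r hn hr hdvd S T U hS hT hU
end

section
/- Let m ≥ 2 and 1 ≤ r ≤ m. Let 𝒟_A be a real probability distribution with mean μ_A, second moment ν_A and variance σ_A² = ν_A − μ_A² (all finite), let A₁, A₂ ∈ ℝ^{(m−1)×(m−1)} have i.i.d. entries distributed as 𝒟_A, and let a : (ℤ_m)³ → ℝ be the embedded signal supported on X₁∪X₂ (a(−i,j,0) = (A₁)_{i,j}, a(0,−i,j) = (A₂)_{i,j}). Let ξ, η ∈ (ℤ_m)³ both have all three coordinates in {r,…,m−1} (i.e., ξ, η ∉ K₁∪K₂∪K₃ where Kᵢ = {ζ : ζᵢ ∈ {0,…,r−1}}), and set δ = ξ − η. Then E[â(ξ)·conj(â(η))] = 4μ_A²/m³ + (σ_A²/m³)·Σ_{x∈X₁∪X₂}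 ω^{x·δ}; in particular this expectation depends on (ξ,η) only through δ, and |E[â(ξ)·conj(â(η))]| ≤ 4μ_A²/m³ + σ_A²·q_a(δ), where q_a(δ) = 2/m if (δ₁=δ₂=0 or δ₂=δ₃=0), q_a(δ) = 2/m³ if δ₁, δ₂, δ₃ are all nonzero, and q_a(δ) = 2/m² otherwise. The analogous statement holds for the signal b supported on X₂∪X₃ built from matrices with i.i.d. entries from a distribution 𝒟_B (mean μ_B, variance σ_B²), with the bound q_b(δ) = 2/m if (δ₂=δ₃=0 or δ₃=δ₁=0), q_b(δ) = 2/m³ if all coordinates of δ are nonzero, and q_b(δ) = 2/m² otherwise. -/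
open MeasureTheory ProbabilityTheory

/-- `ω^k` where `ω = exp(-2πi/m)` and `k` is the canonical representative of
`x ∈ ℤ_m`. -/
noncomputable def zchar (m : ℕ) (x : ZMod m) : ℂ :=
  Complex.exp ((-2) * (Real.pi : ℂ) * Complex.I * (x.val : ℂ) / (m : ℂ))

/-- The dot product `g·ξ` on `(ℤ_m)³`, computed in `ℤ_m`. -/
def dot3 {m : ℕ} (g ξ : ZMod m × ZMod m × ZMod m) : ZMod m :=
  g.1 * ξ.1 + g.2.1 * ξ.2.1 + g.2.2 * ξ.2.2

/-- The embedding `{1,…,m-1} → ℤ_m`, `i ↦ i+1` for `i : Fin (m-1)`. -/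
def emb (m : ℕ) (i : Fin (m - 1)) : ZMod m := (((i : ℕ) + 1 : ℕ) : ZMod m)

/-- The embedded `a`-signal on `(ℤ_m)³`: `a(-i, j, 0) = (A₁)_{i,j}` and
`a(0, -i, j) = (A₂)_{i,j}`, zero elsewhere (supported on `X₁ ∪ X₂`). -/
noncomputable def aSig (m : ℕ) (A1 A2 : Fin (m - 1) → Fin (m - 1) → ℝ)
    (g : ZMod m × ZMod m × ZMod m) : ℝ :=
  (∑ i, ∑ j, if g = (-(emb m i), emb m j, 0) then A1 i j else 0) +
    (∑ i, ∑ j, if g = (0, -(emb m i), emb m j) then A2 i j else 0)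

/-- The embedded `b`-signal on `(ℤ_m)³`: `b(0, -i, j) = (B₁)_{i,j}` and
`b(j, 0, -i) = (B₂)_{i,j}`, zero elsewhere (supported on `X₂ ∪ X₃`). -/
noncomputable def bSig (m : ℕ) (B1 B2 : Fin (m - 1) → Fin (m - 1) → ℝ)
    (g : ZMod m × ZMod m × ZMod m) : ℝ :=
  (∑ i, ∑ j, if g = (0, -(emb m i), emb m j) then B1 i j else 0) +
    (∑ i, ∑ j, if g = (emb m j, 0, -(emb m i)) then B2 i j else 0)

/-- The Fourier transform on `(ℤ_m)³`: `f̂(ξ) = m^{-3/2} Σ_g f(g) ω^{g·ξ}`,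
`ω = exp(-2πi/m)`. -/
noncomputable def ftC (m : ℕ) [NeZero m] (f : ZMod m × ZMod m × ZMod m → ℂ)
    (ξ : ZMod m × ZMod m × ZMod m) : ℂ :=
  (((m : ℝ) ^ ((-3 : ℝ) / 2) : ℝ) : ℂ) * ∑ g, f g * zchar m (dot3 g ξ)

/-- The bound `q_a(δ)`. -/
noncomputable def qa (m : ℕ) (δ : ZMod m × ZMod m × ZMod m) : ℝ :=
  if (δ.1 = 0 ∧ δ.2.1 = 0) ∨ (δ.2.1 = 0 ∧ δ.2.2 = 0) then 2 / (m : ℝ)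
  else if δ.1 ≠ 0 ∧ δ.2.1 ≠ 0 ∧ δ.2.2 ≠ 0 then 2 / (m : ℝ) ^ 3
  else 2 / (m : ℝ) ^ 2

/-- The bound `q_b(δ)`. -/
noncomputable def qb (m : ℕ) (δ : ZMod m × ZMod m × ZMod m) : ℝ :=
  if (δ.2.1 = 0 ∧ δ.2.2 = 0) ∨ (δ.2.2 = 0 ∧ δ.1 = 0) then 2 / (m : ℝ)
  else if δ.1 ≠ 0 ∧ δ.2.1 ≠ 0 ∧ δ.2.2 ≠ 0 then 2 / (m : ℝ) ^ 3
  else 2 / (m : ℝ) ^ 2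

/-!
Write `â(ξ) = m^{-3/2} ∑_k X_k ω^{p_k·ξ}`, where `p_k` runs over the points of `X₁ ∪ X₂`.
Pairwise independence gives `E[X_k X_l] = μ² + σ² [k = l]`, hence
`E[â(ξ) conj â(η)] = m^{-3} (μ² S(ξ) conj S(η) + σ² ∑_k ω^{p_k·δ})` with `S(ζ) = ∑_k ω^{p_k·ζ}`.
Since `X₁` and `X₂` are products of coordinate sets, every such character sum factors into
one-dimensional sums `∑_{a ≠ 0} ω^{a s}`, equal to `m - 1` for `s = 0` and to `-1` otherwise.
So `S = 2` at frequencies with nonzero coordinates, and bounding the factors gives `q_a`.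
The `b`-signal is the `a`-signal in cyclically shifted coordinates, which reduces its case to `a`.
-/

open Finset

noncomputable def puncturedCharSum (m : ℕ) (s : ZMod m) : ℝ := if s = 0 then (m : ℝ) - 1 else -1

section Character

variable {m : ℕ} [NeZero m]

lemma zchar_eq_stdAddChar (x : ZMod m) : zchar m x = ZMod.stdAddChar (-x) := by
  rw [AddChar.map_neg_eq_inv, ZMod.stdAddChar_apply, ZMod.toCircle_apply, zchar, ← Complex.exp_neg]
  congr 1
  ring

lemma zchar_add (x y : ZMod m) : zchar m (x + y) = zchar m x * zchar m y := by
  simp only [zchar_eq_stdAddChar, neg_add, AddChar.map_add_eq_mul]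

@[simp] lemma zchar_zero : zchar m 0 = 1 := by
  simp [zchar_eq_stdAddChar]

lemma star_zchar (x : ZMod m) : star (zchar m x) = zchar m (-x) := by
  rw [zchar_eq_stdAddChar, zchar_eq_stdAddChar, AddChar.map_neg_eq_conj, neg_neg]
  exact Complex.conj_conj _

lemma sum_zchar_mul (s : ZMod m) :
    ∑ t, zchar m (t * s) = if s = 0 then (m : ℂ) else 0 := by
  simp_rw [zchar_eq_stdAddChar, ← mul_neg]
  rw [AddChar.sum_mulShift _ (ZMod.isPrimitive_stdAddChar m)]
  simp

lemma sum_erase_zero_zchar_mul (s : ZMod m) :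
    ∑ a ∈ univ.erase 0, zchar m (a * s) = puncturedCharSum m s := by
  rw [sum_erase_eq_sub (mem_univ 0), sum_zchar_mul, puncturedCharSum]
  split_ifs <;> simp

end Character

section Embedding

variable {m : ℕ}

lemma val_emb (i : Fin (m - 1)) : (emb m i).val = i + 1 :=
  ZMod.val_cast_of_lt (by omega)

variable [NeZero m]

lemma sum_emb {M : Type*} [AddCommMonoid M] (f : ZMod m → M) :
    ∑ i, f (emb m i) = ∑ a ∈ univ.erase 0, f a := by
  refine sum_nbij (emb m) (fun i _ => ?_) (fun i _ j _ h => ?_) (fun a ha => ?_) (fun _ _ => rfl)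
  · simp [← ZMod.val_ne_zero, val_emb]
  · have := congrArg ZMod.val h
    simp only [val_emb] at this
    exact Fin.ext (by omega)
  · have ha0 : a.val ≠ 0 := by simpa [ZMod.val_eq_zero] using ha
    refine ⟨⟨a.val - 1, by have := a.val_lt; omega⟩, by simp, ?_⟩
    simp only [emb, show a.val - 1 + 1 = a.val by omega, ZMod.natCast_zmod_val]

lemma sum_neg_emb {M : Type*} [AddCommMonoid M] (f : ZMod m → M) :
    ∑ i, f (-emb m i) = ∑ a ∈ univ.erase 0, f a := by
  rw [sum_emb (fun a => f (-a))]
  exact sum_nbij' Neg.neg Neg.neg (by simp) (by simp) (by simp) (by simp) (by simp)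

end Embedding

section Supports

variable {m : ℕ} [NeZero m]

lemma sum_product_zchar_dot3 (s t u : Finset (ZMod m)) (τ : ZMod m × ZMod m × ZMod m) :
    ∑ x ∈ s ×ˢ t ×ˢ u, zchar m (dot3 x τ) =
      (∑ a ∈ s, zchar m (a * τ.1)) *
        ((∑ b ∈ t, zchar m (b * τ.2.1)) * ∑ c ∈ u, zchar m (c * τ.2.2)) := by
  rw [sum_mul_sum, sum_mul_sum]
  simp only [sum_product, dot3, zchar_add, mul_sum, mul_assoc]

variable (m) in
/-- `X₁ ∪ X₂`. -/
def aSupport : Finset (ZMod m × ZMod m × ZMod m) :=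
  univ.filter fun g => (g.1 ≠ 0 ∧ g.2.1 ≠ 0 ∧ g.2.2 = 0) ∨ (g.1 = 0 ∧ g.2.1 ≠ 0 ∧ g.2.2 ≠ 0)

variable (m) in
/-- `X₂ ∪ X₃`. -/
def bSupport : Finset (ZMod m × ZMod m × ZMod m) :=
  univ.filter fun g => (g.1 = 0 ∧ g.2.1 ≠ 0 ∧ g.2.2 ≠ 0) ∨ (g.1 ≠ 0 ∧ g.2.1 = 0 ∧ g.2.2 ≠ 0)

lemma sum_aSupport_eq_add {M : Type*} [AddCommMonoid M] (f : ZMod m × ZMod m × ZMod m → M) :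
    ∑ x ∈ aSupport m, f x =
      ∑ x ∈ univ.erase 0 ×ˢ univ.erase 0 ×ˢ {0}, f x +
        ∑ x ∈ {0} ×ˢ univ.erase 0 ×ˢ univ.erase 0, f x := by
  rw [← sum_union]
  · congr 1
    ext ⟨a, b, c⟩
    simp only [aSupport, mem_filter, mem_union, mem_product, mem_erase, mem_singleton, mem_univ]
    tauto
  · simp only [disjoint_left, mem_product, mem_erase, mem_singleton]
    rintro ⟨a, b, c⟩ ⟨⟨ha, -⟩, -⟩ ⟨rfl, -⟩
    exact ha rfl

lemma sum_aSupport_zchar_dot3 (τ : ZMod m × ZMod m × ZMod m) :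
    ∑ x ∈ aSupport m, zchar m (dot3 x τ) =
      ((puncturedCharSum m τ.1 * puncturedCharSum m τ.2.1 +
        puncturedCharSum m τ.2.1 * puncturedCharSum m τ.2.2 : ℝ) : ℂ) := by
  simp only [sum_aSupport_eq_add, sum_product_zchar_dot3, sum_erase_zero_zchar_mul, sum_singleton,
    zero_mul, zchar_zero]
  push_cast
  ring

variable (m) in
/-- `aPoint m (t, i, j)` is the point of `(ℤ_m)³` carrying the entry `(i, j)` of `A_{t+1}`. -/
def aPoint (k : Fin 2 × Fin (m - 1) × Fin (m - 1)) : ZMod m × ZMod m × ZMod m :=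
  ![(-emb m k.2.1, emb m k.2.2, 0), (0, -emb m k.2.1, emb m k.2.2)] k.1

lemma sum_aPoint {M : Type*} [AddCommMonoid M] (f : ZMod m × ZMod m × ZMod m → M) :
    ∑ k, f (aPoint m k) = ∑ x ∈ aSupport m, f x := by
  simp only [sum_aSupport_eq_add, Fintype.sum_prod_type, Fin.sum_univ_two, sum_product,
    sum_singleton, aPoint, Matrix.cons_val_zero, Matrix.cons_val_one]
  rw [sum_neg_emb fun a => ∑ j, f (a, emb m j, 0), sum_neg_emb fun b => ∑ j, f (0, b, emb m j)]
  congr 1 <;> refine sum_congr rfl fun a _ => ?_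
  exacts [sum_emb fun b => f (a, b, 0), sum_emb fun c => f (0, a, c)]

end Supports

section Signals

variable {m : ℕ}

lemma aSig_eq_sum_ite (c : Fin 2 × Fin (m - 1) × Fin (m - 1) → ℝ) (g : ZMod m × ZMod m × ZMod m) :
    aSig m (fun i j => c (0, i, j)) (fun i j => c (1, i, j)) g =
      ∑ k, if g = aPoint m k then c k else 0 := by
  simp only [aSig, Fintype.sum_prod_type, Fin.sum_univ_two, aPoint, Matrix.cons_val_zero,
    Matrix.cons_val_one]
  rfl

variable [NeZero m]

lemma ftC_sum_ite {I : Type*} [Fintype I] (p : I → ZMod m × ZMod m × ZMod m) (c : I → ℝ)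
    (ζ : ZMod m × ZMod m × ZMod m) :
    ftC m (fun g => ((∑ k, if g = p k then c k else 0 : ℝ) : ℂ)) ζ =
      (((m : ℝ) ^ ((-3 : ℝ) / 2) : ℝ) : ℂ) * ∑ k, (c k : ℂ) * zchar m (dot3 (p k) ζ) := by
  simp only [ftC, Complex.ofReal_sum, apply_ite (fun x : ℝ => (x : ℂ)), Complex.ofReal_zero,
    sum_mul, ite_mul, zero_mul]
  rw [sum_comm]
  simp

variable (m) in
noncomputable def aHat {Ω : Type*} (X : Fin 2 × Fin (m - 1) × Fin (m - 1) → Ω → ℝ) (ω : Ω)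
    (ζ : ZMod m × ZMod m × ZMod m) : ℂ :=
  ftC m (fun g => ((aSig m (fun i j => X (0, i, j) ω) (fun i j => X (1, i, j) ω) g : ℝ) : ℂ)) ζ

lemma aHat_eq_sum {Ω : Type*} (X : Fin 2 × Fin (m - 1) × Fin (m - 1) → Ω → ℝ) (ω : Ω)
    (ζ : ZMod m × ZMod m × ZMod m) :
    aHat m X ω ζ = (((m : ℝ) ^ ((-3 : ℝ) / 2) : ℝ) : ℂ) *
      ∑ k, (X k ω : ℂ) * zchar m (dot3 (aPoint m k) ζ) := by
  simp only [aHat, aSig_eq_sum_ite (fun k => X k ω), ftC_sum_ite]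

end Signals

section Rotation

def rot3 {α : Type*} : α × α × α ≃ α × α × α :=
  (Equiv.prodComm _ _).trans (Equiv.prodAssoc _ _ _)

@[simp] lemma rot3_apply {α : Type*} (g : α × α × α) : rot3 g = (g.2.1, g.2.2, g.1) := rfl

lemma rot3_sub {α : Type*} [Sub α] (g h : α × α × α) : rot3 (g - h) = rot3 g - rot3 h := rfl

lemma dot3_rot3 {m : ℕ} (g ζ : ZMod m × ZMod m × ZMod m) : dot3 (rot3 g) (rot3 ζ) = dot3 g ζ := by
  simp only [dot3, rot3_apply]
  ring

variable {m : ℕ}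

lemma bSig_eq_aSig_rot3 (B₁ B₂ : Fin (m - 1) → Fin (m - 1) → ℝ) (g : ZMod m × ZMod m × ZMod m) :
    bSig m B₁ B₂ g = aSig m B₁ B₂ (rot3 g) := by
  obtain ⟨x, y, z⟩ := g
  simp only [bSig, aSig, rot3_apply, Prod.mk.injEq]
  congr 1 <;> simp only [and_comm, and_left_comm, and_assoc]

lemma ftC_bSig [NeZero m] (B₁ B₂ : Fin (m - 1) → Fin (m - 1) → ℝ) (ζ : ZMod m × ZMod m × ZMod m) :
    ftC m (fun g => ((bSig m B₁ B₂ g : ℝ) : ℂ)) ζ =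
      ftC m (fun g => ((aSig m B₁ B₂ g : ℝ) : ℂ)) (rot3 ζ) := by
  unfold ftC
  congr 1
  exact Fintype.sum_equiv rot3 _ _ fun g => by simp only [bSig_eq_aSig_rot3, dot3_rot3]

lemma sum_bSupport_zchar_dot3 [NeZero m] (δ : ZMod m × ZMod m × ZMod m) :
    ∑ x ∈ bSupport m, zchar m (dot3 x δ) = ∑ x ∈ aSupport m, zchar m (dot3 x (rot3 δ)) :=
  sum_equiv rot3 (fun _ => by simp [aSupport, bSupport]; tauto)
    fun g _ => by rw [dot3_rot3]

lemma qb_eq_qa_rot3 (δ : ZMod m × ZMod m × ZMod m) : qb m δ = qa m (rot3 δ) := by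
  simp only [qb, qa, rot3_apply, and_rotate (a := δ.1 ≠ 0)]
  rfl

end Rotation

section Moments

variable {Ω : Type*} [MeasurableSpace Ω] {μ : Measure Ω}

lemma sq_integral_le_integral_sq [IsProbabilityMeasure μ] {f : Ω → ℝ} (hf : Integrable f μ)
    (hf2 : Integrable (fun ω => f ω ^ 2) μ) : (∫ ω, f ω ∂μ) ^ 2 ≤ ∫ ω, f ω ^ 2 ∂μ := by
  have hvar := variance_nonneg f μ
  rw [variance_eq_sub ((memLp_two_iff_integrable_sq hf.aestronglyMeasurable).2 hf2)] at hvar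
  simpa using hvar

variable {I : Type*} {X : I → Ω → ℝ} {μ₀ ν₀ : ℝ}

lemma integrable_mul_of_pairwise_indepFun (hindep : Pairwise fun i j => IndepFun (X i) (X j) μ)
    (hint : ∀ i, Integrable (X i) μ) (hint2 : ∀ i, Integrable (fun ω => X i ω ^ 2) μ) (k l : I) :
    Integrable (fun ω => X k ω * X l ω) μ := by
  rcases eq_or_ne k l with rfl | hkl
  · simpa [sq] using hint2 k
  · exact (hindep hkl).integrable_mul (hint k) (hint l)

lemma integral_mul_of_pairwise_indepFun [DecidableEq I]
    (hindep : Pairwise fun i j => IndepFun (X i) (X j) μ) (hint : ∀ i, Integrable (X i) μ)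
    (hmean : ∀ i, ∫ ω, X i ω ∂μ = μ₀) (hmom : ∀ i, ∫ ω, X i ω ^ 2 ∂μ = ν₀) (k l : I) :
    ∫ ω, X k ω * X l ω ∂μ = μ₀ ^ 2 + if k = l then ν₀ - μ₀ ^ 2 else 0 := by
  rcases eq_or_ne k l with rfl | hkl
  · simp [← hmom k, sq]
  · rw [(hindep hkl).integral_fun_mul_eq_mul_integral (hint k).aestronglyMeasurable
      (hint l).aestronglyMeasurable, hmean, hmean, if_neg hkl]
    ring

lemma integral_sum_mul_sum [Fintype I] (hindep : Pairwise fun i j => IndepFun (X i) (X j) μ)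
    (hint : ∀ i, Integrable (X i) μ) (hint2 : ∀ i, Integrable (fun ω => X i ω ^ 2) μ)
    (hmean : ∀ i, ∫ ω, X i ω ∂μ = μ₀) (hmom : ∀ i, ∫ ω, X i ω ^ 2 ∂μ = ν₀) (C D : I → ℂ) :
    ∫ ω, (∑ k, (X k ω : ℂ) * C k) * ∑ l, (X l ω : ℂ) * D l ∂μ =
      ((μ₀ ^ 2 : ℝ) : ℂ) * ((∑ k, C k) * ∑ l, D l) + ((ν₀ - μ₀ ^ 2 : ℝ) : ℂ) * ∑ k, C k * D k := by
  classical
  have hexpand : ∀ ω, (∑ k, (X k ω : ℂ) * C k) * ∑ l, (X l ω : ℂ) * D l =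
      ∑ k, ∑ l, ((X k ω * X l ω : ℝ) : ℂ) * (C k * D l) := fun ω => by
    rw [sum_mul_sum]
    refine sum_congr rfl fun k _ => sum_congr rfl fun l _ => ?_
    push_cast
    ring
  have hint_kl : ∀ k l, Integrable (fun ω => ((X k ω * X l ω : ℝ) : ℂ) * (C k * D l)) μ :=
    fun k l => (integrable_mul_of_pairwise_indepFun hindep hint hint2 k l).ofReal.mul_const _
  simp only [hexpand]
  rw [integral_finsetSum _ fun k _ => integrable_finsetSum _ fun l _ => hint_kl k l]
  simp only [integral_finsetSum _ fun l _ => hint_kl _ l, integral_mul_const,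
    integral_complex_ofReal, integral_mul_of_pairwise_indepFun hindep hint hmean hmom,
    Complex.ofReal_add, add_mul, sum_add_distrib]
  congr 1
  · rw [sum_mul_sum, mul_sum]
    simp only [mul_sum]
  · simp only [apply_ite, Complex.ofReal_zero, ite_mul, zero_mul, sum_ite_eq, mem_univ, if_true,
      mul_sum]

end Moments

section Bounds

variable {m : ℕ}

lemma puncturedCharSum_of_ne_zero {s : ZMod m} (hs : s ≠ 0) : puncturedCharSum m s = -1 :=
  if_neg hs

lemma abs_puncturedCharSum_le (hm : 2 ≤ m) (s : ZMod m) : |puncturedCharSum m s| ≤ m - 1 := by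
  have hm' : (2 : ℝ) ≤ m := by exact_mod_cast hm
  unfold puncturedCharSum
  split_ifs <;> rw [abs_le] <;> constructor <;> linarith

lemma abs_puncturedCharSum_mul_le (hm : 2 ≤ m) {s t : ZMod m} (h : s ≠ 0 ∨ t ≠ 0) :
    |puncturedCharSum m s * puncturedCharSum m t| ≤ m - 1 := by
  rw [abs_mul]
  rcases h with h | h
  · simpa [puncturedCharSum_of_ne_zero h] using abs_puncturedCharSum_le hm t
  · simpa [puncturedCharSum_of_ne_zero h] using abs_puncturedCharSum_le hm s

lemma norm_sum_aSupport_zchar_dot3_le [NeZero m] (hm : 2 ≤ m) (δ : ZMod m × ZMod m × ZMod m) :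
    ‖∑ x ∈ aSupport m, zchar m (dot3 x δ)‖ ≤ m ^ 3 * qa m δ := by
  have hm' : (2 : ℝ) ≤ m := by exact_mod_cast hm
  rw [sum_aSupport_zchar_dot3, Complex.norm_real, Real.norm_eq_abs]
  refine (abs_add_le _ _).trans ?_
  unfold qa
  split_ifs with hzero hnz
  · have hP := abs_puncturedCharSum_le hm (m := m)
    calc _ ≤ ((m : ℝ) - 1) * (m - 1) + (m - 1) * (m - 1) := by
          rw [abs_mul, abs_mul]
          gcongr <;> first | exact hP _ | linarith
      _ ≤ m ^ 3 * (2 / m) := by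
          field_simp
          nlinarith
  · obtain ⟨h1, h2, h3⟩ := hnz
    rw [puncturedCharSum_of_ne_zero h1, puncturedCharSum_of_ne_zero h2,
      puncturedCharSum_of_ne_zero h3]
    field_simp
    norm_num
  · have h12 : δ.1 ≠ 0 ∨ δ.2.1 ≠ 0 := by tauto
    have h23 : δ.2.1 ≠ 0 ∨ δ.2.2 ≠ 0 := by tauto
    calc _ ≤ ((m : ℝ) - 1) + (m - 1) :=
          add_le_add (abs_puncturedCharSum_mul_le hm h12) (abs_puncturedCharSum_mul_le hm h23)
      _ ≤ m ^ 3 * (2 / m ^ 2) := by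
          field_simp
          linarith

end Bounds

section Correlation

variable {m : ℕ} [NeZero m]

lemma sum_aPoint_zchar_dot3_of_ne_zero {ζ : ZMod m × ZMod m × ZMod m}
    (hζ : ζ.1 ≠ 0 ∧ ζ.2.1 ≠ 0 ∧ ζ.2.2 ≠ 0) : ∑ k, zchar m (dot3 (aPoint m k) ζ) = 2 := by
  obtain ⟨h1, h2, h3⟩ := hζ
  rw [sum_aPoint fun x => zchar m (dot3 x ζ), sum_aSupport_zchar_dot3,
    puncturedCharSum_of_ne_zero h1, puncturedCharSum_of_ne_zero h2, puncturedCharSum_of_ne_zero h3]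
  norm_num

lemma zchar_dot3_mul_star_zchar_dot3 (g ξ η : ZMod m × ZMod m × ZMod m) :
    zchar m (dot3 g ξ) * star (zchar m (dot3 g η)) = zchar m (dot3 g (ξ - η)) := by
  rw [star_zchar, ← zchar_add]
  congr 1
  simp only [dot3, Prod.fst_sub, Prod.snd_sub]
  ring

lemma rpow_neg_three_halves_mul_self :
    (m : ℝ) ^ ((-3 : ℝ) / 2) * (m : ℝ) ^ ((-3 : ℝ) / 2) = ((m : ℝ) ^ 3)⁻¹ := by
  have hm : (0 : ℝ) < m := Nat.cast_pos.2 (NeZero.pos m)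
  rw [← Real.rpow_add hm, ← Real.rpow_natCast, ← Real.rpow_neg hm.le]
  norm_num

variable {Ω : Type*} [MeasurableSpace Ω] {μ : Measure Ω}
  {X : Fin 2 × Fin (m - 1) × Fin (m - 1) → Ω → ℝ} {μ₀ ν₀ : ℝ}

theorem integral_aHat_mul_star (hindep : Pairwise fun i j => IndepFun (X i) (X j) μ)
    (hint : ∀ i, Integrable (X i) μ) (hint2 : ∀ i, Integrable (fun ω => X i ω ^ 2) μ)
    (hmean : ∀ i, ∫ ω, X i ω ∂μ = μ₀) (hmom : ∀ i, ∫ ω, X i ω ^ 2 ∂μ = ν₀)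
    {ξ η : ZMod m × ZMod m × ZMod m} (hξ : ξ.1 ≠ 0 ∧ ξ.2.1 ≠ 0 ∧ ξ.2.2 ≠ 0)
    (hη : η.1 ≠ 0 ∧ η.2.1 ≠ 0 ∧ η.2.2 ≠ 0) :
    ∫ ω, aHat m X ω ξ * star (aHat m X ω η) ∂μ =
      ((4 * μ₀ ^ 2 / (m : ℝ) ^ 3 : ℝ) : ℂ) +
        (((ν₀ - μ₀ ^ 2) / (m : ℝ) ^ 3 : ℝ) : ℂ) * ∑ x ∈ aSupport m, zchar m (dot3 x (ξ - η)) := by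
  have hexpand : ∀ ω, aHat m X ω ξ * star (aHat m X ω η) =
      (((m : ℝ) ^ 3)⁻¹ : ℝ) * ((∑ k, (X k ω : ℂ) * zchar m (dot3 (aPoint m k) ξ)) *
        ∑ l, (X l ω : ℂ) * star (zchar m (dot3 (aPoint m l) η))) := fun ω => by
    rw [aHat_eq_sum, aHat_eq_sum, star_mul', star_sum,
      ← rpow_neg_three_halves_mul_self]
    simp only [star_mul', Complex.star_def, Complex.conj_ofReal, Complex.ofReal_mul]
    ring
  simp only [hexpand]
  rw [integral_const_mul, integral_sum_mul_sum hindep hint hint2 hmean hmom,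
    ← star_sum, sum_aPoint_zchar_dot3_of_ne_zero hξ, sum_aPoint_zchar_dot3_of_ne_zero hη,
    star_ofNat]
  simp only [zchar_dot3_mul_star_zchar_dot3]
  rw [sum_aPoint fun x => zchar m (dot3 x (ξ - η))]
  push_cast
  ring

theorem norm_integral_aHat_mul_star_le [IsProbabilityMeasure μ] (hm : 2 ≤ m)
    (hindep : Pairwise fun i j => IndepFun (X i) (X j) μ)
    (hint : ∀ i, Integrable (X i) μ) (hint2 : ∀ i, Integrable (fun ω => X i ω ^ 2) μ)
    (hmean : ∀ i, ∫ ω, X i ω ∂μ = μ₀) (hmom : ∀ i, ∫ ω, X i ω ^ 2 ∂μ = ν₀)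
    {ξ η : ZMod m × ZMod m × ZMod m} (hξ : ξ.1 ≠ 0 ∧ ξ.2.1 ≠ 0 ∧ ξ.2.2 ≠ 0)
    (hη : η.1 ≠ 0 ∧ η.2.1 ≠ 0 ∧ η.2.2 ≠ 0) :
    ‖∫ ω, aHat m X ω ξ * star (aHat m X ω η) ∂μ‖ ≤
      4 * μ₀ ^ 2 / (m : ℝ) ^ 3 + (ν₀ - μ₀ ^ 2) * qa m (ξ - η) := by
  obtain ⟨i⟩ : Nonempty (Fin 2 × Fin (m - 1) × Fin (m - 1)) := ⟨(0, ⟨0, by omega⟩, ⟨0, by omega⟩)⟩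
  have hvar : 0 ≤ ν₀ - μ₀ ^ 2 := by
    have := sq_integral_le_integral_sq (hint i) (hint2 i)
    rw [hmean, hmom] at this
    linarith
  have hm3 : (0 : ℝ) < m ^ 3 := by positivity
  rw [integral_aHat_mul_star hindep hint hint2 hmean hmom hξ hη]
  calc _ ≤ 4 * μ₀ ^ 2 / m ^ 3 +
        (ν₀ - μ₀ ^ 2) / m ^ 3 * ‖∑ x ∈ aSupport m, zchar m (dot3 x (ξ - η))‖ := by
        refine (norm_add_le _ _).trans ?_
        rw [norm_mul, Complex.norm_real, Complex.norm_real, Real.norm_of_nonneg (by positivity),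
          Real.norm_of_nonneg (by positivity)]
    _ ≤ 4 * μ₀ ^ 2 / m ^ 3 + (ν₀ - μ₀ ^ 2) / m ^ 3 * (m ^ 3 * qa m (ξ - η)) := by
        gcongr
        exact norm_sum_aSupport_zchar_dot3_le hm _
    _ = 4 * μ₀ ^ 2 / m ^ 3 + (ν₀ - μ₀ ^ 2) * qa m (ξ - η) := by
        field_simp

end Correlation

theorem statement6_general (m r : ℕ) [NeZero m] (hm : 2 ≤ m) (hr1 : 1 ≤ r)
    {Ω : Type*} [MeasurableSpace Ω] (μ : Measure Ω) [IsProbabilityMeasure μ]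
    (X Y : Fin 2 × Fin (m - 1) × Fin (m - 1) → Ω → ℝ)
    (μA νA μB νB : ℝ)
    (hXindep : iIndepFun X μ)
    (hYindep : iIndepFun Y μ)
    (hXint : ∀ i, Integrable (X i) μ) (hXint2 : ∀ i, Integrable (fun ω => X i ω ^ 2) μ)
    (hYint : ∀ i, Integrable (Y i) μ) (hYint2 : ∀ i, Integrable (fun ω => Y i ω ^ 2) μ)
    (hXmean : ∀ i, ∫ ω, X i ω ∂μ = μA) (hXmom : ∀ i, ∫ ω, X i ω ^ 2 ∂μ = νA)
    (hYmean : ∀ i, ∫ ω, Y i ω ∂μ = μB) (hYmom : ∀ i, ∫ ω, Y i ω ^ 2 ∂μ = νB)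
    (ξ η : ZMod m × ZMod m × ZMod m)
    (hξ : r ≤ ξ.1.val ∧ r ≤ ξ.2.1.val ∧ r ≤ ξ.2.2.val)
    (hη : r ≤ η.1.val ∧ r ≤ η.2.1.val ∧ r ≤ η.2.2.val)
    (δ : ZMod m × ZMod m × ZMod m) (hδ : δ = ξ - η)
    (ftA ftB : ZMod m × ZMod m × ZMod m → Ω → ℂ)
    (hftA : ∀ ζ ω, ftA ζ ω = ftC m
      (fun g => ((aSig m (fun i j => X (0, i, j) ω) (fun i j => X (1, i, j) ω) g : ℝ) : ℂ)) ζ)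
    (hftB : ∀ ζ ω, ftB ζ ω = ftC m
      (fun g => ((bSig m (fun i j => Y (0, i, j) ω) (fun i j => Y (1, i, j) ω) g : ℝ) : ℂ)) ζ) :
    (∫ ω, ftA ξ ω * star (ftA η ω) ∂μ =
      ((4 * μA ^ 2 / (m : ℝ) ^ 3 : ℝ) : ℂ) +
        (((νA - μA ^ 2) / (m : ℝ) ^ 3 : ℝ) : ℂ) *
          ∑ x ∈ Finset.univ.filter
              (fun g : ZMod m × ZMod m × ZMod m =>
                (g.1 ≠ 0 ∧ g.2.1 ≠ 0 ∧ g.2.2 = 0) ∨ (g.1 = 0 ∧ g.2.1 ≠ 0 ∧ g.2.2 ≠ 0)),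
            zchar m (dot3 x δ)) ∧
    ‖∫ ω, ftA ξ ω * star (ftA η ω) ∂μ‖ ≤
      4 * μA ^ 2 / (m : ℝ) ^ 3 + (νA - μA ^ 2) * qa m δ ∧
    (∫ ω, ftB ξ ω * star (ftB η ω) ∂μ =
      ((4 * μB ^ 2 / (m : ℝ) ^ 3 : ℝ) : ℂ) +
        (((νB - μB ^ 2) / (m : ℝ) ^ 3 : ℝ) : ℂ) *
          ∑ x ∈ Finset.univ.filter
              (fun g : ZMod m × ZMod m × ZMod m =>
                (g.1 = 0 ∧ g.2.1 ≠ 0 ∧ g.2.2 ≠ 0) ∨ (g.1 ≠ 0 ∧ g.2.1 = 0 ∧ g.2.2 ≠ 0)),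
            zchar m (dot3 x δ)) ∧
    ‖∫ ω, ftB ξ ω * star (ftB η ω) ∂μ‖ ≤
      4 * μB ^ 2 / (m : ℝ) ^ 3 + (νB - μB ^ 2) * qb m δ := by
  have hne : ∀ s : ZMod m, r ≤ s.val → s ≠ 0 := fun s hs h => by
    rw [h, ZMod.val_zero] at hs
    omega
  have hξ₀ : ξ.1 ≠ 0 ∧ ξ.2.1 ≠ 0 ∧ ξ.2.2 ≠ 0 := ⟨hne _ hξ.1, hne _ hξ.2.1, hne _ hξ.2.2⟩
  have hη₀ : η.1 ≠ 0 ∧ η.2.1 ≠ 0 ∧ η.2.2 ≠ 0 := ⟨hne _ hη.1, hne _ hη.2.1, hne _ hη.2.2⟩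
  have hrξ₀ : (rot3 ξ).1 ≠ 0 ∧ (rot3 ξ).2.1 ≠ 0 ∧ (rot3 ξ).2.2 ≠ 0 := ⟨hξ₀.2.1, hξ₀.2.2, hξ₀.1⟩
  have hrη₀ : (rot3 η).1 ≠ 0 ∧ (rot3 η).2.1 ≠ 0 ∧ (rot3 η).2.2 ≠ 0 := ⟨hη₀.2.1, hη₀.2.2, hη₀.1⟩
  have hX : Pairwise fun i j => IndepFun (X i) (X j) μ := fun _ _ => hXindep.indepFun
  have hY : Pairwise fun i j => IndepFun (Y i) (Y j) μ := fun _ _ => hYindep.indepFun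
  subst hδ
  simp only [hftA, hftB, ftC_bSig]
  refine ⟨integral_aHat_mul_star hX hXint hXint2 hXmean hXmom hξ₀ hη₀,
    norm_integral_aHat_mul_star_le hm hX hXint hXint2 hXmean hXmom hξ₀ hη₀, ?_, ?_⟩
  · have hB := integral_aHat_mul_star hY hYint hYint2 hYmean hYmom hrξ₀ hrη₀
    rwa [← rot3_sub, ← sum_bSupport_zchar_dot3] at hB
  · rw [qb_eq_qa_rot3, rot3_sub]
    exact norm_integral_aHat_mul_star_le hm hY hYint hYint2 hYmean hYmom hrξ₀ hrη₀

/-- **Low Correlation Lemma.** For matrices with i.i.d. entries from a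
distribution with mean `μ_A`, second moment `ν_A` and variance `σ_A² = ν_A - μ_A²`,
embedded as the signal `a` on `X₁ ∪ X₂ ⊆ (ℤ_m)³`, and frequencies `ξ, η` with all
coordinates in `{r,…,m-1}`, the correlation `E[â(ξ) conj(â(η))]` equals
`4μ_A²/m³ + (σ_A²/m³) Σ_{x∈X₁∪X₂} ω^{x·δ}` where `δ = ξ - η`; in particular it depends
only on `δ` and is bounded by `4μ_A²/m³ + σ_A² q_a(δ)`. The analogous claims hold for
the `b`-signal supported on `X₂ ∪ X₃`. -/
theorem statement6 (m r : ℕ) [NeZero m] (hm : 2 ≤ m) (hr1 : 1 ≤ r) (hrm : r ≤ m)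
    {Ω : Type*} [MeasurableSpace Ω] (μ : Measure Ω) [IsProbabilityMeasure μ]
    (X Y : Fin 2 × Fin (m - 1) × Fin (m - 1) → Ω → ℝ)
    (μA νA μB νB : ℝ)
    (hXmeas : ∀ i, Measurable (X i)) (hYmeas : ∀ i, Measurable (Y i))
    (hXindep : iIndepFun X μ)
    (hYindep : iIndepFun Y μ)
    (hXid : ∀ i j, IdentDistrib (X i) (X j) μ μ)
    (hYid : ∀ i j, IdentDistrib (Y i) (Y j) μ μ)
    (hXint : ∀ i, Integrable (X i) μ) (hXint2 : ∀ i, Integrable (fun ω => X i ω ^ 2) μ)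
    (hYint : ∀ i, Integrable (Y i) μ) (hYint2 : ∀ i, Integrable (fun ω => Y i ω ^ 2) μ)
    (hXmean : ∀ i, ∫ ω, X i ω ∂μ = μA) (hXmom : ∀ i, ∫ ω, X i ω ^ 2 ∂μ = νA)
    (hYmean : ∀ i, ∫ ω, Y i ω ∂μ = μB) (hYmom : ∀ i, ∫ ω, Y i ω ^ 2 ∂μ = νB)
    (ξ η : ZMod m × ZMod m × ZMod m)
    (hξ : r ≤ ξ.1.val ∧ r ≤ ξ.2.1.val ∧ r ≤ ξ.2.2.val)
    (hη : r ≤ η.1.val ∧ r ≤ η.2.1.val ∧ r ≤ η.2.2.val)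
    (δ : ZMod m × ZMod m × ZMod m) (hδ : δ = ξ - η)
    (ftA ftB : ZMod m × ZMod m × ZMod m → Ω → ℂ)
    (hftA : ∀ ζ ω, ftA ζ ω = ftC m
      (fun g => ((aSig m (fun i j => X (0, i, j) ω) (fun i j => X (1, i, j) ω) g : ℝ) : ℂ)) ζ)
    (hftB : ∀ ζ ω, ftB ζ ω = ftC m
      (fun g => ((bSig m (fun i j => Y (0, i, j) ω) (fun i j => Y (1, i, j) ω) g : ℝ) : ℂ)) ζ) :
    (∫ ω, ftA ξ ω * star (ftA η ω) ∂μ =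
      ((4 * μA ^ 2 / (m : ℝ) ^ 3 : ℝ) : ℂ) +
        (((νA - μA ^ 2) / (m : ℝ) ^ 3 : ℝ) : ℂ) *
          ∑ x ∈ Finset.univ.filter
              (fun g : ZMod m × ZMod m × ZMod m =>
                (g.1 ≠ 0 ∧ g.2.1 ≠ 0 ∧ g.2.2 = 0) ∨ (g.1 = 0 ∧ g.2.1 ≠ 0 ∧ g.2.2 ≠ 0)),
            zchar m (dot3 x δ)) ∧
    ‖∫ ω, ftA ξ ω * star (ftA η ω) ∂μ‖ ≤
      4 * μA ^ 2 / (m : ℝ) ^ 3 + (νA - μA ^ 2) * qa m δ ∧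
    (∫ ω, ftB ξ ω * star (ftB η ω) ∂μ =
      ((4 * μB ^ 2 / (m : ℝ) ^ 3 : ℝ) : ℂ) +
        (((νB - μB ^ 2) / (m : ℝ) ^ 3 : ℝ) : ℂ) *
          ∑ x ∈ Finset.univ.filter
              (fun g : ZMod m × ZMod m × ZMod m =>
                (g.1 = 0 ∧ g.2.1 ≠ 0 ∧ g.2.2 ≠ 0) ∨ (g.1 ≠ 0 ∧ g.2.1 = 0 ∧ g.2.2 ≠ 0)),
            zchar m (dot3 x δ)) ∧
    ‖∫ ω, ftB ξ ω * star (ftB η ω) ∂μ‖ ≤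
      4 * μB ^ 2 / (m : ℝ) ^ 3 + (νB - μB ^ 2) * qb m δ :=
  statement6_general m r hm hr1 μ X Y μA νA μB νB hXindep hYindep hXint hXint2 hYint hYint2 hXmean
    hXmom hYmean hYmom ξ η hξ hη δ hδ ftA ftB hftA hftB
end

section
/- Let m ≥ 2, ω = exp(−2πi/m), and for δ ∈ (ℤ_m)³ define T(δ) = Σ_{x∈X₁∪X₃} ω^{x·δ}. Then: |T(δ)| ≤ 2m² if δ = 0 or δ has only its second coordinate nonzero or only its third coordinate nonzero; |T(δ)| ≤ 2m if δ has only its first coordinate nonzero or has exactly two nonzero coordinates; and |T(δ)| ≤ 2 if all three coordinates of δ are nonzero. -/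
/-!
On `X₁ ∪ X₃` the character sum factorises: with `F(a) = ∑_{x ≠ 0} ω^{xa}`,
`T(δ) = F(δ₁) (F(δ₂) + F(δ₃))`. Orthogonality of the characters `x ↦ ω^{xa}` gives
`F(a) = m - 1` for `a = 0` and `F(a) = -1` otherwise, so every factor has norm at most `m`,
and norm `1` at a nonzero coordinate of `δ`.
-/

open Finset

namespace AddChar

variable {R : Type*} [CommRing R]

theorem IsPrimitive.inv {M : Type*} [CommMonoid M] {ψ : AddChar R M} (hψ : ψ.IsPrimitive) :
    ψ⁻¹.IsPrimitive := fun a ha h ↦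
  hψ (neg_ne_zero.2 ha) <| by ext x; simpa using DFunLike.congr_fun h x

variable [Fintype R] [DecidableEq R] (ψ : AddChar R ℂ)

def sumNonzeroMul (a : R) : ℂ := ∑ x ∈ univ.filter (· ≠ 0), ψ (x * a)

variable {ψ}

theorem sumNonzeroMul_eq (hψ : ψ.IsPrimitive) (a : R) :
    ψ.sumNonzeroMul a = if a = 0 then (Fintype.card R : ℂ) - 1 else -1 := by
  rw [sumNonzeroMul, filter_ne', sum_erase_eq_sub (mem_univ 0), sum_mulShift a hψ]
  split_ifs <;> simp

theorem norm_sumNonzeroMul_le (hψ : ψ.IsPrimitive) (a : R) :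
    ‖ψ.sumNonzeroMul a‖ ≤ Fintype.card R := by
  have hcard : (1 : ℝ) ≤ Fintype.card R := by exact_mod_cast Fintype.card_pos
  rw [sumNonzeroMul_eq hψ]
  split_ifs
  · calc ‖(Fintype.card R : ℂ) - 1‖ = Fintype.card R - 1 := by
          rw [← Complex.ofReal_natCast, ← Complex.ofReal_one, ← Complex.ofReal_sub,
            Complex.norm_real, Real.norm_of_nonneg (by linarith)]
      _ ≤ Fintype.card R := by linarith
  · simpa using hcard

theorem norm_sumNonzeroMul_of_ne_zero (hψ : ψ.IsPrimitive) {a : R} (ha : a ≠ 0) :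
    ‖ψ.sumNonzeroMul a‖ = 1 := by
  simp [sumNonzeroMul_eq hψ, ha]

variable (ψ)

theorem sum_nonzero_nonzero_mul_add_mul (a b : R) :
    ∑ x ∈ univ.filter (· ≠ 0), ∑ y ∈ univ.filter (· ≠ 0), ψ (x * a + y * b) =
      ψ.sumNonzeroMul a * ψ.sumNonzeroMul b := by
  simp_rw [map_add_eq_mul, sumNonzeroMul, sum_mul_sum]

theorem sum_X₁_union_X₃ (δ : R × R × R) :
    ∑ g ∈ univ.filter (fun g : R × R × R =>
          (g.1 ≠ 0 ∧ g.2.1 ≠ 0 ∧ g.2.2 = 0) ∨ (g.1 ≠ 0 ∧ g.2.1 = 0 ∧ g.2.2 ≠ 0)),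
        ψ (g.1 * δ.1 + g.2.1 * δ.2.1 + g.2.2 * δ.2.2) =
      ψ.sumNonzeroMul δ.1 * (ψ.sumNonzeroMul δ.2.1 + ψ.sumNonzeroMul δ.2.2) := by
  have hX₁ : univ.filter (fun g : R × R × R => g.1 ≠ 0 ∧ g.2.1 ≠ 0 ∧ g.2.2 = 0) =
      univ.filter (· ≠ 0) ×ˢ (univ.filter (· ≠ 0) ×ˢ {0}) := by
    ext; simp only [mem_filter, mem_univ, true_and, mem_product, mem_singleton]
  have hX₃ : univ.filter (fun g : R × R × R => g.1 ≠ 0 ∧ g.2.1 = 0 ∧ g.2.2 ≠ 0) =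
      univ.filter (· ≠ 0) ×ˢ ({0} ×ˢ univ.filter (· ≠ 0)) := by
    ext; simp only [mem_filter, mem_univ, true_and, mem_product, mem_singleton]
  rw [filter_or, sum_union (disjoint_filter.2 fun g _ h₁ h₃ ↦ h₁.2.1 h₃.2.1), hX₁, hX₃, mul_add,
    ← sum_nonzero_nonzero_mul_add_mul, ← sum_nonzero_nonzero_mul_add_mul]
  simp [sum_product, add_assoc]

end AddChar

theorem zchar_eq_inv_stdAddChar (m : ℕ) [NeZero m] (x : ZMod m) :
    zchar m x = (ZMod.stdAddChar (N := m))⁻¹ x := by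
  rw [AddChar.inv_apply', ZMod.stdAddChar_apply, ZMod.toCircle_apply, ← Complex.exp_neg, zchar]
  congr 1
  ring

theorem statement7_general (m : ℕ) [NeZero m]
    (δ : ZMod m × ZMod m × ZMod m) (T : ℂ)
    (hT : T = ∑ x ∈ Finset.univ.filter
        (fun g : ZMod m × ZMod m × ZMod m =>
          (g.1 ≠ 0 ∧ g.2.1 ≠ 0 ∧ g.2.2 = 0) ∨ (g.1 ≠ 0 ∧ g.2.1 = 0 ∧ g.2.2 ≠ 0)),
        zchar m (dot3 x δ)) :
    ((δ = 0 ∨ (δ.1 = 0 ∧ δ.2.1 ≠ 0 ∧ δ.2.2 = 0) ∨ (δ.1 = 0 ∧ δ.2.1 = 0 ∧ δ.2.2 ≠ 0)) →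
        ‖T‖ ≤ 2 * (m : ℝ) ^ 2) ∧
    (((δ.1 ≠ 0 ∧ δ.2.1 = 0 ∧ δ.2.2 = 0) ∨
      (δ.1 ≠ 0 ∧ δ.2.1 ≠ 0 ∧ δ.2.2 = 0) ∨ (δ.1 ≠ 0 ∧ δ.2.1 = 0 ∧ δ.2.2 ≠ 0) ∨
      (δ.1 = 0 ∧ δ.2.1 ≠ 0 ∧ δ.2.2 ≠ 0)) →
        ‖T‖ ≤ 2 * (m : ℝ)) ∧
    ((δ.1 ≠ 0 ∧ δ.2.1 ≠ 0 ∧ δ.2.2 ≠ 0) → ‖T‖ ≤ 2) := by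
  set ψ := (ZMod.stdAddChar (N := m))⁻¹
  have hψ : ψ.IsPrimitive := (ZMod.isPrimitive_stdAddChar m).inv
  simp_rw [zchar_eq_inv_stdAddChar, dot3] at hT
  set S := ψ.sumNonzeroMul
  have hT_le : ‖T‖ ≤ ‖S δ.1‖ * (‖S δ.2.1‖ + ‖S δ.2.2‖) := by
    rw [hT, ψ.sum_X₁_union_X₃, norm_mul]
    gcongr
    exact norm_add_le _ _
  have hS_le (a : ZMod m) : ‖S a‖ ≤ m := by
    simpa using AddChar.norm_sumNonzeroMul_le hψ a
  have hS_one {a : ZMod m} (ha : a ≠ 0) : ‖S a‖ = 1 :=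
    AddChar.norm_sumNonzeroMul_of_ne_zero hψ ha
  refine ⟨fun _ ↦ ?_, fun h ↦ ?_, fun ⟨h₁, h₂, h₃⟩ ↦ ?_⟩
  · nlinarith [hS_le δ.1, hS_le δ.2.1, hS_le δ.2.2, norm_nonneg (S δ.1)]
  · by_cases h₁ : δ.1 = 0
    · obtain ⟨h₂, h₃⟩ : δ.2.1 ≠ 0 ∧ δ.2.2 ≠ 0 := by tauto
      nlinarith [hS_le δ.1, hS_one h₂, hS_one h₃]
    · nlinarith [hS_one h₁, hS_le δ.2.1, hS_le δ.2.2]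
  · nlinarith [hS_one h₁, hS_one h₂, hS_one h₃]

/-- Bounds on `T(δ) = Σ_{x ∈ X₁∪X₃} ω^{x·δ}`, where
`X₁ = {(x,y,0) : x≠0, y≠0}` and `X₃ = {(x,0,y) : x≠0, y≠0}` in `(ℤ_m)³`:
`|T(δ)| ≤ 2m²` if `δ = 0` or only the 2nd or only the 3rd coordinate is nonzero;
`|T(δ)| ≤ 2m` if only the 1st coordinate is nonzero or exactly two are nonzero;
`|T(δ)| ≤ 2` if all three coordinates are nonzero. -/
theorem statement7 (m : ℕ) [NeZero m] (hm : 2 ≤ m)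
    (δ : ZMod m × ZMod m × ZMod m) (T : ℂ)
    (hT : T = ∑ x ∈ Finset.univ.filter
        (fun g : ZMod m × ZMod m × ZMod m =>
          (g.1 ≠ 0 ∧ g.2.1 ≠ 0 ∧ g.2.2 = 0) ∨ (g.1 ≠ 0 ∧ g.2.1 = 0 ∧ g.2.2 ≠ 0)),
        zchar m (dot3 x δ)) :
    ((δ = 0 ∨ (δ.1 = 0 ∧ δ.2.1 ≠ 0 ∧ δ.2.2 = 0) ∨ (δ.1 = 0 ∧ δ.2.1 = 0 ∧ δ.2.2 ≠ 0)) →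
        ‖T‖ ≤ 2 * (m : ℝ) ^ 2) ∧
    (((δ.1 ≠ 0 ∧ δ.2.1 = 0 ∧ δ.2.2 = 0) ∨
      (δ.1 ≠ 0 ∧ δ.2.1 ≠ 0 ∧ δ.2.2 = 0) ∨ (δ.1 ≠ 0 ∧ δ.2.1 = 0 ∧ δ.2.2 ≠ 0) ∨
      (δ.1 = 0 ∧ δ.2.1 ≠ 0 ∧ δ.2.2 ≠ 0)) →
        ‖T‖ ≤ 2 * (m : ℝ)) ∧
    ((δ.1 ≠ 0 ∧ δ.2.1 ≠ 0 ∧ δ.2.2 ≠ 0) → ‖T‖ ≤ 2) :=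
  statement7_general m δ T hT
end

section
/- Let d ≥ 1, ε ≥ 0, and let A, B ∈ ℝ^{2d×2d} be partitioned into d×d blocks A_{i,j}, B_{i,j} for i, j ∈ {1,2}. Suppose that for each (i,j) ∈ {1,2}² there are matrices D¹_{i,j}, D²_{i,j} ∈ ℝ^{d×d} satisfying ‖A_{i,1}B_{1,j} − D¹_{i,j}‖_F² + ‖A_{i,2}B_{2,j} − D²_{i,j}‖_F² ≤ ε·(‖A_{i,1}‖_F² + ‖A_{i,2}‖_F²)·(‖B_{1,j}‖_F² + ‖B_{2,j}‖_F²). Let C ∈ ℝ^{2d×2d} be the block matrix with blocks C_{i,j} = D¹_{i,j} + D²_{i,j}. Then ‖C − AB‖_F² ≤ 2ε·‖A‖_F²·‖B‖_F². -/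
/-- The squared Frobenius norm of a real matrix. -/
noncomputable def frob2 {k l : Type*} [Fintype k] [Fintype l] (M : Matrix k l ℝ) : ℝ :=
  ∑ i, ∑ j, (M i j) ^ 2

lemma frob2_fromBlocks {d : ℕ} (M N P Q : Matrix (Fin d) (Fin d) ℝ) :
    frob2 (Matrix.fromBlocks M N P Q) = frob2 M + frob2 N + frob2 P + frob2 Q := by
  simp [frob2, Fintype.sum_sum_type, Finset.sum_add_distrib]
  ring

lemma frob2_add_le {d : ℕ} (M N : Matrix (Fin d) (Fin d) ℝ) :
    frob2 (M + N) ≤ 2 * (frob2 M + frob2 N) := by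
  unfold frob2
  simp only [← Finset.sum_add_distrib, Finset.mul_sum]
  refine Finset.sum_le_sum fun i _ => Finset.sum_le_sum fun j _ => ?_
  have : ((M + N) i j) = M i j + N i j := rfl
  rw [this]
  nlinarith [sq_nonneg (M i j - N i j)]

lemma frob2_sub_comm {d : ℕ} (M N : Matrix (Fin d) (Fin d) ℝ) :
    frob2 (M - N) = frob2 (N - M) := by
  simp only [frob2]
  congr 1; ext i; congr 1; ext j
  simp [Matrix.sub_apply]; ring

/-- If `A, B ∈ ℝ^{2d×2d}` are partitioned into `d×d` blocks and for each
block position `(i,j)` approximate products `D¹_{i,j}, D²_{i,j}` satisfy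
`‖A_{i,1}B_{1,j} − D¹_{i,j}‖_F² + ‖A_{i,2}B_{2,j} − D²_{i,j}‖_F²
  ≤ ε(‖A_{i,1}‖_F² + ‖A_{i,2}‖_F²)(‖B_{1,j}‖_F² + ‖B_{2,j}‖_F²)`,
then the block matrix `C` with blocks `C_{i,j} = D¹_{i,j} + D²_{i,j}` satisfies
`‖C − AB‖_F² ≤ 2ε‖A‖_F²‖B‖_F²`. -/
theorem statement11 (d : ℕ) (hd : 1 ≤ d) (ε : ℝ) (hε : 0 ≤ ε)
    (Ab Bb D1 D2 : Fin 2 → Fin 2 → Matrix (Fin d) (Fin d) ℝ)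
    (h : ∀ i j : Fin 2,
      frob2 (Ab i 0 * Bb 0 j - D1 i j) + frob2 (Ab i 1 * Bb 1 j - D2 i j) ≤
        ε * (frob2 (Ab i 0) + frob2 (Ab i 1)) * (frob2 (Bb 0 j) + frob2 (Bb 1 j)))
    (A B C : Matrix (Fin d ⊕ Fin d) (Fin d ⊕ Fin d) ℝ)
    (hA : A = Matrix.fromBlocks (Ab 0 0) (Ab 0 1) (Ab 1 0) (Ab 1 1))
    (hB : B = Matrix.fromBlocks (Bb 0 0) (Bb 0 1) (Bb 1 0) (Bb 1 1))
    (hC : C = Matrix.fromBlocks (D1 0 0 + D2 0 0) (D1 0 1 + D2 0 1)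
        (D1 1 0 + D2 1 0) (D1 1 1 + D2 1 1)) :
    frob2 (C - A * B) ≤ 2 * ε * frob2 A * frob2 B := by
  subst hA hB hC
  rw [Matrix.fromBlocks_multiply, sub_eq_add_neg, Matrix.fromBlocks_neg, Matrix.fromBlocks_add, frob2_fromBlocks,
    frob2_fromBlocks, frob2_fromBlocks]
  simp only [← sub_eq_add_neg]
  have key : ∀ i j : Fin 2,
      frob2 (D1 i j + D2 i j - (Ab i 0 * Bb 0 j + Ab i 1 * Bb 1 j)) ≤
      2 * (ε * (frob2 (Ab i 0) + frob2 (Ab i 1)) * (frob2 (Bb 0 j) + frob2 (Bb 1 j))) := by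
    intro i j
    have e : D1 i j + D2 i j - (Ab i 0 * Bb 0 j + Ab i 1 * Bb 1 j)
        = (D1 i j - Ab i 0 * Bb 0 j) + (D2 i j - Ab i 1 * Bb 1 j) := by
      abel
    rw [e]
    calc frob2 ((D1 i j - Ab i 0 * Bb 0 j) + (D2 i j - Ab i 1 * Bb 1 j))
        ≤ 2 * (frob2 (D1 i j - Ab i 0 * Bb 0 j) + frob2 (D2 i j - Ab i 1 * Bb 1 j)) :=
          frob2_add_le _ _
      _ = 2 * (frob2 (Ab i 0 * Bb 0 j - D1 i j) + frob2 (Ab i 1 * Bb 1 j - D2 i j)) := by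
          rw [frob2_sub_comm (D1 i j), frob2_sub_comm (D2 i j)]
      _ ≤ 2 * (ε * (frob2 (Ab i 0) + frob2 (Ab i 1)) * (frob2 (Bb 0 j) + frob2 (Bb 1 j))) := by
          linarith [h i j]
  have h00 := key 0 0; have h01 := key 0 1; have h10 := key 1 0; have h11 := key 1 1
  nlinarith [h00, h01, h10, h11]
end

section
/- Let G be a finite abelian group satisfying the triple product property for ⟨n,m,p⟩ via subsets S, T, U ⊆ G with |S| = n, |T| = m, |U| = p. Then |G| ≥ n·m·p. (In particular, an abelian group satisfying the TPP with three sets of size n has |G| ≥ n³.) -/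
/-- If a finite abelian group `G` satisfies the triple product property
for `⟨n,m,p⟩` via subsets `S, T, U ⊆ G` with `|S| = n`, `|T| = m`, `|U| = p`, then
`|G| ≥ n·m·p`. -/
theorem statement14 {G : Type*} [CommGroup G] [Fintype G] [DecidableEq G]
    (n m p : ℕ) (S T U : Finset G)
    (hS : S.card = n) (hT : T.card = m) (hU : U.card = p)
    (hTPP : ∀ s₁ ∈ S, ∀ s₂ ∈ S, ∀ t₁ ∈ T, ∀ t₂ ∈ T, ∀ u₁ ∈ U, ∀ u₂ ∈ U,
      (s₁ * s₂⁻¹) * (t₁ * t₂⁻¹) * (u₁ * u₂⁻¹) = 1 → s₁ = s₂ ∧ t₁ = t₂ ∧ u₁ = u₂) :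
    n * m * p ≤ Fintype.card G := by
  have hinj : Set.InjOn (fun x : (G × G) × G => x.1.1 * x.1.2 * x.2)
      ((S ×ˢ T) ×ˢ U : Finset ((G × G) × G)) := by
    rintro ⟨⟨s₁, t₁⟩, u₁⟩ h₁ ⟨⟨s₂, t₂⟩, u₂⟩ h₂ heq
    simp only [Finset.coe_product, Set.mem_prod, Finset.mem_coe] at h₁ h₂
    simp only at heq
    have key : (s₁ * s₂⁻¹) * (t₁ * t₂⁻¹) * (u₁ * u₂⁻¹) = 1 := by
      have : s₁ * t₁ * u₁ * (s₂ * t₂ * u₂)⁻¹ = 1 := by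
        rw [heq]; group
      calc (s₁ * s₂⁻¹) * (t₁ * t₂⁻¹) * (u₁ * u₂⁻¹)
          = s₁ * t₁ * u₁ * (s₂ * t₂ * u₂)⁻¹ := by
            simp [mul_comm, mul_assoc, mul_left_comm]
        _ = 1 := this
    obtain ⟨hs, ht, hu⟩ := hTPP s₁ h₁.1.1 s₂ h₂.1.1 t₁ h₁.1.2 t₂ h₂.1.2 u₁ h₁.2 u₂ h₂.2 key
    simp [hs, ht, hu]
  calc n * m * p = ((S ×ˢ T) ×ˢ U).card := by
        simp [Finset.card_product, hS, hT, hU]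
    _ = (((S ×ˢ T) ×ˢ U).image (fun x : (G × G) × G => x.1.1 * x.1.2 * x.2)).card := by
        rw [Finset.card_image_of_injOn hinj]
    _ ≤ Fintype.card G := Finset.card_le_univ _
end

section
/- Let G and G′ be finite groups. If subsets (S,T,U) of G satisfy the triple product property for ⟨n,m,p⟩ in G and subsets (S′,T′,U′) of G′ satisfy the triple product property for ⟨n′,m′,p′⟩ in G′, then (S×S′, T×T′, U×U′) satisfies the triple product property for ⟨nn′, mm′, pp′⟩ in the product group G×G′. -/
/-- The triple product property for a triple of subsets of a group. -/
def IsTPP {G : Type*} [Group G] (S T U : Finset G) : Prop :=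
  ∀ s₁ ∈ S, ∀ s₂ ∈ S, ∀ t₁ ∈ T, ∀ t₂ ∈ T, ∀ u₁ ∈ U, ∀ u₂ ∈ U,
    (s₁ * s₂⁻¹) * (t₁ * t₂⁻¹) * (u₁ * u₂⁻¹) = 1 → s₁ = s₂ ∧ t₁ = t₂ ∧ u₁ = u₂

/-- If `(S,T,U)` satisfies the TPP for `⟨n,m,p⟩` in `G` and
`(S',T',U')` satisfies the TPP for `⟨n',m',p'⟩` in `G'`, then
`(S×S', T×T', U×U')` satisfies the TPP for `⟨nn', mm', pp'⟩` in `G × G'`. -/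
theorem statement16 {G G' : Type*} [Group G] [Group G']
    (n m p n' m' p' : ℕ) (S T U : Finset G) (S' T' U' : Finset G')
    (hS : S.card = n) (hT : T.card = m) (hU : U.card = p)
    (hS' : S'.card = n') (hT' : T'.card = m') (hU' : U'.card = p')
    (h : IsTPP S T U) (h' : IsTPP S' T' U') :
    (S ×ˢ S').card = n * n' ∧ (T ×ˢ T').card = m * m' ∧ (U ×ˢ U').card = p * p' ∧
      IsTPP (S ×ˢ S') (T ×ˢ T') (U ×ˢ U') := by
  refine ⟨by simp [Finset.card_product, hS, hS'],
    by simp [Finset.card_product, hT, hT'],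
    by simp [Finset.card_product, hU, hU'], ?_⟩
  rintro ⟨s₁, s₁'⟩ hs₁ ⟨s₂, s₂'⟩ hs₂ ⟨t₁, t₁'⟩ ht₁ ⟨t₂, t₂'⟩ ht₂ ⟨u₁, u₁'⟩ hu₁ ⟨u₂, u₂'⟩ hu₂ heq
  simp only [Finset.mem_product] at hs₁ hs₂ ht₁ ht₂ hu₁ hu₂
  rw [Prod.ext_iff] at heq
  simp only [Prod.fst_mul, Prod.snd_mul, Prod.fst_inv, Prod.snd_inv, Prod.fst_one, Prod.snd_one] at heq
  obtain ⟨hg, hg'⟩ := heq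
  obtain ⟨e1, e2, e3⟩ := h s₁ hs₁.1 s₂ hs₂.1 t₁ ht₁.1 t₂ ht₂.1 u₁ hu₁.1 u₂ hu₂.1 hg
  obtain ⟨f1, f2, f3⟩ := h' s₁' hs₁.2 s₂' hs₂.2 t₁' ht₁.2 t₂' ht₂.2 u₁' hu₁.2 u₂' hu₂.2 hg'
  exact ⟨Prod.ext e1 f1, Prod.ext e2 f2, Prod.ext e3 f3⟩
end

section
/- Let G and G′ be finite groups. If the triples (Sᵢ,Tᵢ,Uᵢ), i = 1,…,k, satisfy the simultaneous triple product property in G and the triples (S′ⱼ,T′ⱼ,U′ⱼ), j = 1,…,k′, satisfy the simultaneous triple product property in G′, then the k·k′ triples (Sᵢ×S′ⱼ, Tᵢ×T′ⱼ, Uᵢ×U′ⱼ), for i ∈ {1,…,k} and j ∈ {1,…,k′}, satisfy the simultaneous triple product property in G×G′. -/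
/-- The simultaneous triple product property for a family of triples of subsets. -/
def IsSTPP {G : Type*} [Group G] {ι : Type*} (S T U : ι → Finset G) : Prop :=
  (∀ i, IsTPP (S i) (T i) (U i)) ∧
    ∀ i j k : ι, ∀ s ∈ S i, ∀ s' ∈ S j, ∀ t ∈ T j, ∀ t' ∈ T k, ∀ u ∈ U k, ∀ u' ∈ U i,
      s * s'⁻¹ * t * t'⁻¹ * u * u'⁻¹ = 1 → i = j ∧ j = k

/-- If triples `(Sᵢ,Tᵢ,Uᵢ)`, `i = 1,…,k`, satisfy the STPP in `G` and
triples `(S'ⱼ,T'ⱼ,U'ⱼ)`, `j = 1,…,k'`, satisfy the STPP in `G'`, then the `k·k'` triples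
`(Sᵢ×S'ⱼ, Tᵢ×T'ⱼ, Uᵢ×U'ⱼ)` satisfy the STPP in `G × G'`. -/
theorem statement17 {G G' : Type*} [Group G] [Group G'] (k k' : ℕ)
    (S T U : Fin k → Finset G) (S' T' U' : Fin k' → Finset G')
    (h : IsSTPP S T U) (h' : IsSTPP S' T' U') :
    IsSTPP (fun ij : Fin k × Fin k' => S ij.1 ×ˢ S' ij.2)
      (fun ij : Fin k × Fin k' => T ij.1 ×ˢ T' ij.2)
      (fun ij : Fin k × Fin k' => U ij.1 ×ˢ U' ij.2) := by
  constructor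
  · rintro ⟨i, j⟩ ⟨s₁, s₁'⟩ hs₁ ⟨s₂, s₂'⟩ hs₂ ⟨t₁, t₁'⟩ ht₁ ⟨t₂, t₂'⟩ ht₂ ⟨u₁, u₁'⟩ hu₁
      ⟨u₂, u₂'⟩ hu₂ heq
    simp only [Finset.mem_product] at hs₁ hs₂ ht₁ ht₂ hu₁ hu₂
    rw [Prod.ext_iff] at heq
    obtain ⟨e1, e2⟩ := heq
    obtain ⟨a1, a2, a3⟩ := h.1 i s₁ hs₁.1 s₂ hs₂.1 t₁ ht₁.1 t₂ ht₂.1 u₁ hu₁.1 u₂ hu₂.1 e1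
    obtain ⟨b1, b2, b3⟩ := h'.1 j s₁' hs₁.2 s₂' hs₂.2 t₁' ht₁.2 t₂' ht₂.2 u₁' hu₁.2 u₂' hu₂.2 e2
    exact ⟨Prod.ext a1 b1, Prod.ext a2 b2, Prod.ext a3 b3⟩
  · rintro ⟨i₁, j₁⟩ ⟨i₂, j₂⟩ ⟨i₃, j₃⟩ ⟨s, sb⟩ hs ⟨s', sb'⟩ hs' ⟨t, tb⟩ ht ⟨t', tb'⟩ ht'
      ⟨u, ub⟩ hu ⟨u', ub'⟩ hu' heq
    simp only [Finset.mem_product] at hs hs' ht ht' hu hu'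
    rw [Prod.ext_iff] at heq
    obtain ⟨e1, e2⟩ := heq
    obtain ⟨a1, a2⟩ := h.2 i₁ i₂ i₃ s hs.1 s' hs'.1 t ht.1 t' ht'.1 u hu.1 u' hu'.1 e1
    obtain ⟨b1, b2⟩ := h'.2 j₁ j₂ j₃ sb hs.2 sb' hs'.2 tb ht.2 tb' ht'.2 ub hu.2 ub' hu'.2 e2
    exact ⟨Prod.ext a1 b1, Prod.ext a2 b2⟩
end

section
/- Let m ≥ 2 and let H = (ℤ_m)³ with coordinate subgroups H₁ = {(x,0,0)}, H₂ = {(0,x,0)}, H₃ = {(0,0,x)}. Define S₁⁰ = H₁∖{0}, S₂⁰ = H₂∖{0}, S₃⁰ = H₃∖{0} and S₁¹ = H₂∖{0}, S₂¹ = H₃∖{0}, S₃¹ = H₁∖{0}. Then the two triples (S₁⁰, S₂⁰, S₃⁰) and (S₁¹, S₂¹, S₃¹) satisfy the simultaneous triple product property in H, each triple satisfying the TPP for ⟨m−1, m−1, m−1⟩. -/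
/-- The triple product property (additive notation). -/
def IsAddTPP {G : Type*} [AddGroup G] (S T U : Finset G) : Prop :=
  ∀ s₁ ∈ S, ∀ s₂ ∈ S, ∀ t₁ ∈ T, ∀ t₂ ∈ T, ∀ u₁ ∈ U, ∀ u₂ ∈ U,
    (s₁ - s₂) + (t₁ - t₂) + (u₁ - u₂) = 0 → s₁ = s₂ ∧ t₁ = t₂ ∧ u₁ = u₂

/-- The simultaneous triple product property (additive notation). -/
def IsAddSTPP {G : Type*} [AddGroup G] {ι : Type*} (S T U : ι → Finset G) : Prop :=
  (∀ i, IsAddTPP (S i) (T i) (U i)) ∧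
    ∀ i j k : ι, ∀ s ∈ S i, ∀ s' ∈ S j, ∀ t ∈ T j, ∀ t' ∈ T k, ∀ u ∈ U k, ∀ u' ∈ U i,
      (s - s') + (t - t') + (u - u') = 0 → i = j ∧ j = k

/-- `H₁ ∖ {0}`, `H₂ ∖ {0}`, `H₃ ∖ {0}`: nonzero elements of the coordinate subgroups
of `(ℤ_m)³`. -/
def coordAxis (m : ℕ) [NeZero m] : Fin 3 → Finset (ZMod m × ZMod m × ZMod m) :=
  ![Finset.univ.filter (fun g => g.1 ≠ 0 ∧ g.2.1 = 0 ∧ g.2.2 = 0),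
    Finset.univ.filter (fun g => g.1 = 0 ∧ g.2.1 ≠ 0 ∧ g.2.2 = 0),
    Finset.univ.filter (fun g => g.1 = 0 ∧ g.2.1 = 0 ∧ g.2.2 ≠ 0)]

/-- The CKSU sets: `Sᵢ⁰` and `Sᵢ¹` for `i ∈ {1,2,3}`, indexed here by
`b ∈ {false, true}` (for the superscript) and `i : Fin 3`.
`S₁⁰ = H₁∖{0}, S₂⁰ = H₂∖{0}, S₃⁰ = H₃∖{0}`, `S₁¹ = H₂∖{0}, S₂¹ = H₃∖{0}, S₃¹ = H₁∖{0}`. -/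
def cksuSet (m : ℕ) [NeZero m] (i : Fin 3) (b : Bool) : Finset (ZMod m × ZMod m × ZMod m) :=
  if b then coordAxis m (i + 1) else coordAxis m i

lemma mem_axis0 {m : ℕ} [NeZero m] {g : ZMod m × ZMod m × ZMod m} :
    g ∈ coordAxis m 0 ↔ g.1 ≠ 0 ∧ g.2.1 = 0 ∧ g.2.2 = 0 := by simp [coordAxis]

lemma mem_axis1 {m : ℕ} [NeZero m] {g : ZMod m × ZMod m × ZMod m} :
    g ∈ coordAxis m 1 ↔ g.1 = 0 ∧ g.2.1 ≠ 0 ∧ g.2.2 = 0 := by simp [coordAxis]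

lemma mem_axis2 {m : ℕ} [NeZero m] {g : ZMod m × ZMod m × ZMod m} :
    g ∈ coordAxis m 2 ↔ g.1 = 0 ∧ g.2.1 = 0 ∧ g.2.2 ≠ 0 := by simp [coordAxis]

lemma axisCard (m : ℕ) [NeZero m] (i : Fin 3) : (coordAxis m i).card = m - 1 := by
  have hinj0 : Function.Injective (fun x : ZMod m => ((x, 0, 0) : ZMod m × ZMod m × ZMod m)) :=
    fun a b h => by simpa using h
  have hinj1 : Function.Injective (fun x : ZMod m => ((0, x, 0) : ZMod m × ZMod m × ZMod m)) :=
    fun a b h => by simpa [Prod.ext_iff] using h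
  have hinj2 : Function.Injective (fun x : ZMod m => ((0, 0, x) : ZMod m × ZMod m × ZMod m)) :=
    fun a b h => by simpa [Prod.ext_iff] using h
  have hc : (Finset.univ.filter (fun x : ZMod m => x ≠ 0)).card = m - 1 := by
    rw [Finset.filter_ne' Finset.univ 0, Finset.card_erase_of_mem (Finset.mem_univ 0)]
    simp [ZMod.card]
  fin_cases i
  · show (coordAxis m 0).card = m - 1
    rw [show coordAxis m 0 = (Finset.univ.filter (fun x : ZMod m => x ≠ 0)).image
        (fun x => (x, 0, 0)) by
      ext g; simp [coordAxis, Prod.ext_iff, and_comm, eq_comm, and_assoc]]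
    rw [Finset.card_image_of_injective _ hinj0, hc]
  · show (coordAxis m 1).card = m - 1
    rw [show coordAxis m 1 = (Finset.univ.filter (fun x : ZMod m => x ≠ 0)).image
        (fun x => (0, x, 0)) by
      ext g; simp [coordAxis, Prod.ext_iff, and_comm, eq_comm, and_assoc]]
    rw [Finset.card_image_of_injective _ hinj1, hc]
  · show (coordAxis m 2).card = m - 1
    rw [show coordAxis m 2 = (Finset.univ.filter (fun x : ZMod m => x ≠ 0)).image
        (fun x => (0, 0, x)) by
      ext g; simp [coordAxis, Prod.ext_iff, and_comm, eq_comm, and_assoc]]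
    rw [Finset.card_image_of_injective _ hinj2, hc]

/-- In `H = (ℤ_m)³`, the two triples `(S₁⁰,S₂⁰,S₃⁰)` and
`(S₁¹,S₂¹,S₃¹)` satisfy the simultaneous triple product property, each triple being a
TPP triple for `⟨m-1, m-1, m-1⟩`. -/
theorem statement18 (m : ℕ) [NeZero m] (hm : 2 ≤ m) :
    IsAddSTPP (fun b : Bool => cksuSet m 0 b) (fun b : Bool => cksuSet m 1 b)
      (fun b : Bool => cksuSet m 2 b) ∧
    ∀ b : Bool, (cksuSet m 0 b).card = m - 1 ∧ (cksuSet m 1 b).card = m - 1 ∧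
      (cksuSet m 2 b).card = m - 1 := by
  constructor
  · constructor
    · intro b s₁ hs₁ s₂ hs₂ t₁ ht₁ t₂ ht₂ u₁ hu₁ u₂ hu₂ heq
      rw [Prod.ext_iff, Prod.ext_iff] at heq
      cases b <;>
        simp only [cksuSet, Bool.false_eq_true, if_true, if_false,
          show ((0:Fin 3)+1 = 1) from rfl, show ((1:Fin 3)+1 = 2) from rfl,
          show ((2:Fin 3)+1 = 0) from rfl,
          mem_axis0, mem_axis1, mem_axis2] at hs₁ hs₂ ht₁ ht₂ hu₁ hu₂ <;>
        obtain ⟨ha, hb, hc⟩ := hs₁ <;> obtain ⟨ha', hb', hc'⟩ := hs₂ <;>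
        obtain ⟨hd, he, hf⟩ := ht₁ <;> obtain ⟨hd', he', hf'⟩ := ht₂ <;>
        obtain ⟨hg, hh, hi⟩ := hu₁ <;> obtain ⟨hg', hh', hi'⟩ := hu₂ <;>
        refine ⟨Prod.ext ?_ (Prod.ext ?_ ?_), Prod.ext ?_ (Prod.ext ?_ ?_),
          Prod.ext ?_ (Prod.ext ?_ ?_)⟩ <;>
        simp_all [Prod.ext_iff, sub_eq_zero]
    · intro i j k s hs s' hs' t ht t' ht' u hu u' hu' heq
      rw [Prod.ext_iff, Prod.ext_iff] at heq
      cases i <;> cases j <;> cases k <;>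
        simp only [cksuSet, Bool.false_eq_true, if_true, if_false,
          show ((0:Fin 3)+1 = 1) from rfl, show ((1:Fin 3)+1 = 2) from rfl,
          show ((2:Fin 3)+1 = 0) from rfl,
          mem_axis0, mem_axis1, mem_axis2] at hs hs' ht ht' hu hu' <;>
        simp_all [Prod.ext_iff, sub_eq_zero]
  · intro b
    cases b <;>
      simp only [cksuSet, Bool.false_eq_true, if_true, if_false,
        show ((0:Fin 3)+1 = 1) from rfl, show ((1:Fin 3)+1 = 2) from rfl,
        show ((2:Fin 3)+1 = 0) from rfl] <;>
      exact ⟨axisCard m _, axisCard m _, axisCard m _⟩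
end
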